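/- arXiv:1802.06098 — 3 statements merged into one kernel-verified Lean document; each statement's English description precedes it below -/
import Mathlib

section
/- Let (X,r) be a finite colored space with a_2(r) = a_3(r) = 4. Suppose there exists a color α with ααα ∈ A_3(r) such that {α} is not closed. Then the remaining three colors can be labeled β,γ,δ so that A_3(r) = {ααα, ααβ, ααγ, ααδ}. -/
/-- The set of colors of the colored space `(X, r)`: values `r x y` for distinct `x, y`. -/
def colorIm {X C : Type*} (r : X → X → C) : Set C :=
  {α | ∃ x y : X, x ≠ y ∧ r x y = α}

/-- `a₂(r)`: the number of colors. -/
noncomputable def a2 {X C : Type*} (r : X → X → C) : ℕ := (colorIm r).ncard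

/-- `A₃(r)`: the set of multisets of colors of triangles on 3-subsets of `X`. -/
def A3 {X C : Type*} (r : X → X → C) : Set (Multiset C) :=
  {m | ∃ x y z : X, x ≠ y ∧ y ≠ z ∧ x ≠ z ∧ m = {r x y, r y z, r x z}}

/-- `a₃(r)`: the number of isometry classes of 3-subsets. -/
noncomputable def a3 {X C : Type*} (r : X → X → C) : ℕ := (A3 r).ncard

/-- `M_k(r)`: colors `α` such that the graph `(X, E_α)` has a vertex of degree at least `k`. -/
def Mdeg {X C : Type*} (r : X → X → C) (k : ℕ) : Set C :=
  {α | ∃ x : X, k ≤ {y | y ≠ x ∧ r x y = α}.ncard}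

/-- A nonempty set `Γ` of colors is closed if `α, β ∈ Γ` and `αβγ ∈ A₃(r)` imply `γ ∈ Γ`. -/
def IsClosedColors {X C : Type*} (r : X → X → C) (Γ : Set C) : Prop :=
  ∀ α β γ : C, α ∈ Γ → β ∈ Γ → ({α, β, γ} : Multiset C) ∈ A3 r → γ ∈ Γ

/-- The union of the color classes `E_α`, `α ∈ S`, is a matching (max degree ≤ 1). -/
def IsMatchingOn {X C : Type*} (r : X → X → C) (S : Set C) : Prop :=
  ∀ x y z : X, y ≠ x → z ≠ x → r x y ∈ S → r x z ∈ S → y = z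

/-- `r₁` is a fusion of `r`: the color partition of `r` refines that of `r₁`. -/
def IsFusion {X C D : Type*} (r : X → X → C) (r₁ : X → X → D) : Prop :=
  ∀ x y u v : X, x ≠ y → u ≠ v → r x y = r u v → r₁ x y = r₁ u v

/-- The connected component of `x₀` in the graph on `X` whose edges are the pairs
colored by an element of `S`. -/
def compOf {X C : Type*} (r : X → X → C) (S : Set C) (x₀ : X) : Set X :=
  {y | Relation.ReflTransGen (fun a b => a ≠ b ∧ r a b ∈ S) x₀ y}

/-- `A₃` of the subspace induced on `W ⊆ X`. -/
def A3on {X C : Type*} (r : X → X → C) (W : Set X) : Set (Multiset C) :=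
  {m | ∃ x ∈ W, ∃ y ∈ W, ∃ z ∈ W, x ≠ y ∧ y ≠ z ∧ x ≠ z ∧ m = {r x y, r y z, r x z}}


set_option maxHeartbeats 1000000

section helpers

variable {C : Type*}

theorem ms_swap12 {a b c : C} : ({a,b,c} : Multiset C) = {b,a,c} := by
  change a ::ₘ b ::ₘ c ::ₘ 0 = b ::ₘ a ::ₘ c ::ₘ 0
  rw [Multiset.cons_swap]

theorem ms_swap23 {a b c : C} : ({a,b,c} : Multiset C) = {a,c,b} := by
  change a ::ₘ b ::ₘ c ::ₘ 0 = a ::ₘ c ::ₘ b ::ₘ 0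
  rw [Multiset.cons_swap b c]

theorem ms_rot {a b c : C} : ({a,b,c} : Multiset C) = {b,c,a} := by
  rw [ms_swap12, ms_swap23]

theorem ms_swap13 {a b c : C} : ({a,b,c} : Multiset C) = {c,b,a} := by
  rw [ms_rot, ms_swap12]

theorem pair_eq {a b c d : C} : ({a,b} : Multiset C) = {c,d} ↔ (a=c∧b=d) ∨ (a=d∧b=c) := by
  simp only [Multiset.insert_eq_cons, Multiset.cons_eq_cons, Multiset.singleton_inj,
    Multiset.singleton_eq_cons_iff]
  constructor
  · rintro (⟨rfl, rfl⟩ | ⟨hne, cs, ⟨rfl, h1⟩, ⟨rfl, h2⟩⟩)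
    · tauto
    · tauto
  · rintro (⟨rfl, rfl⟩ | ⟨rfl, rfl⟩)
    · tauto
    · by_cases hac : a = b
      · subst hac; tauto
      · exact Or.inr ⟨hac, 0, ⟨rfl, rfl⟩, ⟨rfl, rfl⟩⟩

theorem triple_eq {a b c d e f : C} : ({a,b,c} : Multiset C) = {d,e,f} ↔
    (a = d ∧ ({b,c} : Multiset C) = {e,f}) ∨ (a = e ∧ ({b,c} : Multiset C) = {d,f}) ∨
    (a = f ∧ ({b,c} : Multiset C) = {d,e}) := by
  constructor
  · intro h
    have ha : a ∈ ({d,e,f} : Multiset C) := h ▸ (by simp)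
    simp only [Multiset.insert_eq_cons, Multiset.mem_cons, Multiset.mem_singleton] at ha
    rcases ha with rfl | rfl | rfl
    · left
      refine ⟨rfl, ?_⟩
      have : (a ::ₘ {b,c} : Multiset C) = a ::ₘ {e,f} := h
      exact (Multiset.cons_inj_right a).mp this
    · right; left
      refine ⟨rfl, ?_⟩
      have h2 : ({d,a,f} : Multiset C) = a ::ₘ {d,f} := ms_swap12
      rw [h2] at h
      exact (Multiset.cons_inj_right a).mp h
    · right; right
      refine ⟨rfl, ?_⟩
      have h2 : ({d,e,a} : Multiset C) = a ::ₘ {d,e} := by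
        rw [ms_swap23, ms_swap12]; rfl
      rw [h2] at h
      exact (Multiset.cons_inj_right a).mp h
  · rintro (⟨rfl, h⟩ | ⟨rfl, h⟩ | ⟨rfl, h⟩)
    · show (a ::ₘ _ : Multiset C) = a ::ₘ _
      rw [h]
    · rw [ms_swap12 (a := d)]
      show (a ::ₘ _ : Multiset C) = a ::ₘ _
      rw [h]
    · rw [ms_swap23 (a := d), ms_swap12 (a := d)]
      show (a ::ₘ _ : Multiset C) = a ::ₘ _
      rw [h]

theorem triple_eq' {a b c d e f : C} : ({a,b,c} : Multiset C) = {d,e,f} ↔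
    (a=d ∧ b=e ∧ c=f) ∨ (a=d ∧ b=f ∧ c=e) ∨ (a=e ∧ b=d ∧ c=f) ∨ (a=e ∧ b=f ∧ c=d) ∨
    (a=f ∧ b=d ∧ c=e) ∨ (a=f ∧ b=e ∧ c=d) := by
  rw [triple_eq, pair_eq, pair_eq, pair_eq]
  tauto

theorem mem_triple {a d e f : C} : a ∈ ({d,e,f} : Multiset C) ↔ a = d ∨ a = e ∨ a = f := by
  simp only [Multiset.insert_eq_cons, Multiset.mem_cons, Multiset.mem_singleton]

theorem K1 {α β : C} (h : ({α,β,β} : Multiset C) = {α,α,α}) : β = α := by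
  rw [triple_eq'] at h; tauto

theorem K2 {α β : C} (hβα : β ≠ α) (h : ({α,β,β} : Multiset C) = {α,α,β}) : False := by
  rw [triple_eq'] at h
  rcases h with ⟨h1,h2,h3⟩|⟨h1,h2,h3⟩|⟨h1,h2,h3⟩|⟨h1,h2,h3⟩|⟨h1,h2,h3⟩|⟨h1,h2,h3⟩ <;> subst_vars <;> tauto

theorem K3 {α β c ζ : C} (hαβ : α ≠ β) (hαc : α ≠ c) (hβc : β ≠ c)
    (h : ({α,β,β} : Multiset C) = {β,c,ζ}) : False := by
  rw [triple_eq'] at h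
  rcases h with ⟨h1,h2,h3⟩|⟨h1,h2,h3⟩|⟨h1,h2,h3⟩|⟨h1,h2,h3⟩|⟨h1,h2,h3⟩|⟨h1,h2,h3⟩ <;> subst_vars <;> tauto

theorem K4 {α β d : C} (hβα : β ≠ α) (h : ({α,β,β} : Multiset C) = {α,α,d}) : False := by
  rw [triple_eq'] at h
  rcases h with ⟨h1,h2,h3⟩|⟨h1,h2,h3⟩|⟨h1,h2,h3⟩|⟨h1,h2,h3⟩|⟨h1,h2,h3⟩|⟨h1,h2,h3⟩ <;> subst_vars <;> tauto

theorem K5 {α ζ : C} (h : ({α,ζ,ζ} : Multiset C) = {α,α,α}) : ζ = α := by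
  rw [triple_eq'] at h; tauto

theorem K5b {α β ζ : C} (hβα : β ≠ α) (h : ({α,ζ,ζ} : Multiset C) = {α,α,β}) : False := by
  rw [triple_eq'] at h
  rcases h with ⟨h1,h2,h3⟩|⟨h1,h2,h3⟩|⟨h1,h2,h3⟩|⟨h1,h2,h3⟩|⟨h1,h2,h3⟩|⟨h1,h2,h3⟩ <;> subst_vars <;> tauto

theorem K6 {a b c ζ : C} (hab : a ≠ b) (hac : a ≠ c) (hbc : b ≠ c)
    (h : ({a,ζ,ζ} : Multiset C) = {b,c,ζ}) : False := by
  rw [triple_eq'] at h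
  rcases h with ⟨h1,h2,h3⟩|⟨h1,h2,h3⟩|⟨h1,h2,h3⟩|⟨h1,h2,h3⟩|⟨h1,h2,h3⟩|⟨h1,h2,h3⟩ <;> subst_vars <;> tauto

theorem K7 {α ζ d : C} (h : ({α,ζ,ζ} : Multiset C) = {α,α,d}) : ζ = α := by
  rw [triple_eq'] at h
  rcases h with ⟨h1,h2,h3⟩|⟨h1,h2,h3⟩|⟨h1,h2,h3⟩|⟨h1,h2,h3⟩|⟨h1,h2,h3⟩|⟨h1,h2,h3⟩ <;> subst_vars <;> tauto

theorem K8 {α d : C} (h : ({α,α,d} : Multiset C) = {α,α,α}) : d = α := by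
  rw [triple_eq'] at h; tauto

theorem K9 {α β d : C} (hβα : β ≠ α) (h : ({α,α,d} : Multiset C) = {α,α,β}) : d = β := by
  rw [triple_eq'] at h
  rcases h with ⟨h1,h2,h3⟩|⟨h1,h2,h3⟩|⟨h1,h2,h3⟩|⟨h1,h2,h3⟩|⟨h1,h2,h3⟩|⟨h1,h2,h3⟩ <;> subst_vars <;> tauto


theorem Kgen {α a b c d : C} (hc : c ≠ α) (hd : d ≠ α)
    (h : ({α,a,b} : Multiset C) = {α,c,d}) : ({a,b} : Multiset C) = {c,d} := by
  rw [triple_eq'] at h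
  rw [pair_eq]
  rcases h with ⟨h1,h2,h3⟩|⟨h1,h2,h3⟩|⟨h1,h2,h3⟩|⟨h1,h2,h3⟩|⟨h1,h2,h3⟩|⟨h1,h2,h3⟩ <;>
    subst_vars <;> tauto

theorem K11 {α a b : C} (h : ({α,a,b} : Multiset C) = {α,α,α}) : a = α := by
  rw [triple_eq'] at h; tauto

theorem K12 {α β a b : C} (hαβ : α ≠ β) (haα : a ≠ α) (hbα : b ≠ α)
    (h : ({α,a,b} : Multiset C) = {α,α,β}) : False := by
  rw [triple_eq'] at h
  rcases h with ⟨h1,h2,h3⟩|⟨h1,h2,h3⟩|⟨h1,h2,h3⟩|⟨h1,h2,h3⟩|⟨h1,h2,h3⟩|⟨h1,h2,h3⟩ <;>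
    subst_vars <;> tauto

theorem K16 {α β e θ m : C} (hαβ : α ≠ β) (hαe : α ≠ e) (hβe : β ≠ e)
    (h : ({α,m,m} : Multiset C) = {β,e,θ}) : False := by
  rw [triple_eq'] at h
  rcases h with ⟨h1,h2,h3⟩|⟨h1,h2,h3⟩|⟨h1,h2,h3⟩|⟨h1,h2,h3⟩|⟨h1,h2,h3⟩|⟨h1,h2,h3⟩ <;>
    subst_vars <;> tauto


theorem Khead {α a b p q s : C} (h1 : α ≠ p) (h2 : α ≠ q) (h3 : α ≠ s)
    (h : ({α,a,b} : Multiset C) = {p,q,s}) : False := by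
  rw [triple_eq'] at h; tauto

theorem cancel1 {a b c d e : C} (h : ({a,b,c} : Multiset C) = {a,d,e}) :
    ({b,c} : Multiset C) = {d,e} := (Multiset.cons_inj_right a).mp h

theorem extract_two {a b c1 c2 c3 : C} (ha : a ∈ ({c1,c2,c3} : Multiset C))
    (hb : b ∈ ({c1,c2,c3} : Multiset C)) (hab : a ≠ b) :
    ∃ w, ({c1,c2,c3} : Multiset C) = {a, b, w} := by
  rw [mem_triple] at ha hb
  rcases ha with rfl | rfl | rfl <;> rcases hb with rfl | rfl | rfl
  · exact absurd rfl hab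
  · exact ⟨c3, rfl⟩
  · exact ⟨c2, ms_swap23⟩
  · exact ⟨c3, ms_swap12⟩
  · exact absurd rfl hab
  · exact ⟨c1, ms_rot⟩
  · exact ⟨c2, by rw [ms_rot, ms_rot]⟩
  · exact ⟨c1, ms_swap13⟩
  · exact absurd rfl hab

theorem four_decomp {S : Set C} (hS : S.ncard = 4) {a b : C} (ha : a ∈ S) (hb : b ∈ S)
    (hab : a ≠ b) : ∃ u v : C, u ≠ v ∧ u ≠ a ∧ u ≠ b ∧ v ≠ a ∧ v ≠ b ∧ u ∈ S ∧ v ∈ S ∧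
      S = {a, b, u, v} := by
  have hfin : S.Finite := Set.finite_of_ncard_ne_zero (by omega)
  have hsub : ({a, b} : Set C) ⊆ S := by
    intro d hd; rcases hd with rfl | hd
    · exact ha
    · rcases hd with rfl; exact hb
  have hd2 : (S \ {a, b}).ncard = 2 := by
    rw [Set.ncard_diff hsub ((Set.finite_singleton b).insert a), hS, Set.ncard_pair hab]
  obtain ⟨u, v, huv, heq⟩ := Set.ncard_eq_two.mp hd2
  have hu : u ∈ S \ {a, b} := by rw [heq]; exact Set.mem_insert u {v}
  have hv : v ∈ S \ {a, b} := by rw [heq]; exact Set.mem_insert_of_mem u rfl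
  refine ⟨u, v, huv, ?_, ?_, ?_, ?_, hu.1, hv.1, ?_⟩
  · intro h; exact hu.2 (by rw [h]; exact Set.mem_insert a {b})
  · intro h; exact hu.2 (by rw [h]; exact Set.mem_insert_of_mem a rfl)
  · intro h; exact hv.2 (by rw [h]; exact Set.mem_insert a {b})
  · intro h; exact hv.2 (by rw [h]; exact Set.mem_insert_of_mem a rfl)
  · ext d
    constructor
    · intro hd
      by_cases hda : d = a
      · exact Or.inl hda
      by_cases hdb : d = b
      · exact Or.inr (Or.inl hdb)
      have : d ∈ S \ {a, b} := ⟨hd, by simp [hda, hdb]⟩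
      rw [heq] at this
      rcases this with rfl | rfl
      · exact Or.inr (Or.inr (Or.inl rfl))
      · exact Or.inr (Or.inr (Or.inr rfl))
    · intro hd
      rcases hd with rfl | rfl | rfl | rfl
      · exact ha
      · exact hb
      · exact hu.1
      · exact hv.1

end helpers

section space

variable {X C : Type*} (r : X → X → C)

theorem tri_mem {p q w : X} (h1 : p ≠ q) (h2 : q ≠ w) (h3 : p ≠ w) :
    ({r p q, r q w, r p w} : Multiset C) ∈ A3 r := ⟨p, q, w, h1, h2, h3, rfl⟩

theorem A3_sub_colorIm {m : Multiset C} (hm : m ∈ A3 r) {d : C} (hd : d ∈ m) :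
    d ∈ colorIm r := by
  obtain ⟨p, q, w, h1, h2, h3, rfl⟩ := hm
  rw [mem_triple] at hd
  rcases hd with rfl | rfl | rfl
  · exact ⟨p, q, h1, rfl⟩
  · exact ⟨q, w, h2, rfl⟩
  · exact ⟨p, w, h3, rfl⟩

theorem caseI (hsym : ∀ x y, r x y = r y x) {α β c : C} {T3 T4 : Multiset C}
    (hβα : β ≠ α) (hcα : c ≠ α) (hcβ : c ≠ β)
    (hβIm : β ∈ colorIm r) (hcIm : c ∈ colorIm r)
    (hMem : ∀ m ∈ A3 r, m = {α,α,α} ∨ m = {α,α,β} ∨ m = T3 ∨ m = T4)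
    (hβ3 : β ∉ T3) (hβ4 : β ∉ T4)
    (hcA : ({α,α,c} : Multiset C) ∉ A3 r) : False := by
  obtain ⟨s, t, hst, hrst⟩ := hβIm
  have huniv : ∀ w, w ≠ s → w ≠ t → r w s = α ∧ r w t = α := by
    intro w hws hwt
    have htri := tri_mem r hst (Ne.symm hwt) (Ne.symm hws)
    rw [hrst] at htri
    rcases hMem _ htri with h | h | h | h
    · rw [triple_eq'] at h
      exfalso; tauto
    · rw [triple_eq'] at h
      have h1 : r t w = α ∧ r s w = α := by tauto
      exact ⟨by rw [hsym w s]; exact h1.2, by rw [hsym w t]; exact h1.1⟩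
    · exact absurd (h ▸ (by rw [mem_triple]; tauto : β ∈ ({β, r t w, r s w} : Multiset C))) hβ3
    · exact absurd (h ▸ (by rw [mem_triple]; tauto : β ∈ ({β, r t w, r s w} : Multiset C))) hβ4
  obtain ⟨u, v, huv, hruv⟩ := hcIm
  by_cases hus : u = s
  · subst hus
    have hvt : v ≠ t := fun h => hcβ (by rw [← hruv, h, hrst])
    have h1 := (huniv v (Ne.symm huv) hvt).1
    rw [hsym v u] at h1
    exact hcα (hruv ▸ h1)
  by_cases hut : u = t
  · subst hut
    have hvs : v ≠ s := fun h => hcβ (by rw [← hruv, h, hsym, hrst])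
    have h1 := (huniv v (hvs) (Ne.symm huv)).2
    rw [hsym v u] at h1
    exact hcα (hruv ▸ h1)
  · have h1 := (huniv u hus hut).1
    by_cases hvs : v = s
    · exact hcα (by rw [← hruv, hvs]; exact h1)
    by_cases hvt : v = t
    · exact hcα (by rw [← hruv, hvt]; exact (huniv u hus hut).2)
    · have h2 := (huniv v hvs hvt).1
      have htri := tri_mem r huv (hvs) (hus)
      rw [hruv, h2, h1] at htri
      rw [ms_rot] at htri
      exact hcA htri

theorem classLemma [Fintype X] (hsym : ∀ x y, r x y = r y x) {α β c e : C} {T3 T4 : Multiset C}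
    {x y z : X} (hxy : x ≠ y) (hyz : y ≠ z) (hxz : x ≠ z)
    (exy : r x y = α) (eyz : r y z = α) (exz : r x z = α)
    (hβα : β ≠ α) (hcα : c ≠ α) (hcβ : c ≠ β)
    (heα : e ≠ α) (heβ : e ≠ β) (hec : e ≠ c)
    (hcIm : c ∈ colorIm r) (heIm : e ∈ colorIm r)
    (hA3eq : A3 r = {({α,α,α} : Multiset C), ({α,α,β} : Multiset C), T3, T4})
    (hβT3 : β ∈ T3)
    (hN : ∀ d : C, ({α,α,d} : Multiset C) ∈ A3 r → d = α ∨ d = β)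
    (κ : C) (hκIm : κ ∈ colorIm r) (hκCα : κ ≠ α) (hκCβ : κ ≠ β)
    (hκA : ({α,α,κ} : Multiset C) ∉ A3 r) :
    ∃ (a b : X) (m : C), a ≠ b ∧ r a b = κ ∧ a ≠ x ∧ a ≠ y ∧ a ≠ z ∧
      r a x = m ∧ r a y = m ∧ r a z = m ∧ m ≠ α ∧ ({α,m,m} : Multiset C) ∈ A3 r ∧
      (m = κ ∨ (b ≠ x ∧ b ≠ y ∧ b ≠ z)) := by
  have hαβ : α ≠ β := Ne.symm hβα
  have hαc : α ≠ c := Ne.symm hcα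
  have hβc : β ≠ c := Ne.symm hcβ
  have hαe : α ≠ e := Ne.symm heα
  have hβe : β ≠ e := Ne.symm heβ
  have hce : c ≠ e := Ne.symm hec
  have hMem : ∀ m ∈ A3 r, m = {α,α,α} ∨ m = {α,α,β} ∨ m = T3 ∨ m = T4 := fun m hm => by
    rw [hA3eq] at hm; simpa using hm
  have hT3A : T3 ∈ A3 r := by rw [hA3eq]; simp
  have hT4A : T4 ∈ A3 r := by rw [hA3eq]; simp
  have third : ∀ p q : X, ∃ w, w ≠ p ∧ w ≠ q ∧ (w = x ∨ w = y ∨ w = z) := by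
    intro p q
    by_cases hxp : x = p
    · subst hxp
      by_cases hyq : y = q
      · subst hyq
        exact ⟨z, Ne.symm hxz, Ne.symm hyz, by tauto⟩
      · exact ⟨y, Ne.symm hxy, hyq, by tauto⟩
    · by_cases hxq : x = q
      · subst hxq
        by_cases hyp : y = p
        · subst hyp
          exact ⟨z, Ne.symm hyz, Ne.symm hxz, by tauto⟩
        · exact ⟨y, hyp, Ne.symm hxy, by tauto⟩
      · exact ⟨x, hxp, hxq, by tauto⟩
  have hcov : ∀ d : C, d ∈ colorIm r → d ≠ α → d ≠ β → d ∈ T3 ∨ d ∈ T4 := by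
    intro d hdIm hdα hdβ
    obtain ⟨p, q, hpq, hrpq⟩ := hdIm
    obtain ⟨w, hwp, hwq, _⟩ := third p q
    have htri := tri_mem r hpq (Ne.symm hwq) (Ne.symm hwp)
    rw [hrpq] at htri
    rcases hMem _ htri with h | h | h | h
    · rw [triple_eq'] at h; exfalso; tauto
    · rw [triple_eq'] at h; exfalso; tauto
    · exact Or.inl (h ▸ (by rw [mem_triple]; tauto : d ∈ ({d, r q w, r p w} : Multiset C)))
    · exact Or.inr (h ▸ (by rw [mem_triple]; tauto : d ∈ ({d, r q w, r p w} : Multiset C)))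
  -- P1
  have hP1 : ∀ t t' w : X, t ≠ t' → w ≠ t → w ≠ t' → r t t' = α → r w t = α →
      r w t' = α ∨ r w t' = β := by
    intro t t' w h1 h2 h3 h4 h5
    have htri := tri_mem r h1 (Ne.symm h3) (Ne.symm h2)
    rw [h4, hsym t w, h5, ms_swap23] at htri
    rcases hN _ htri with h | h
    · left; rw [hsym w t']; exact h
    · right; rw [hsym w t']; exact h
  -- NR
  have hNR : ∀ κ : C, κ ≠ α → ({α,α,κ} : Multiset C) ∉ A3 r →
      ∀ u' v' : X, u' ≠ v' → r u' v' = κ →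
      ∃ a b : X, a ≠ b ∧ r a b = κ ∧
        ¬((r a x = α ∧ r a y = α) ∨ (r a x = α ∧ r a z = α) ∨ (r a y = α ∧ r a z = α)) ∧
        a ≠ x ∧ a ≠ y ∧ a ≠ z := by
    intro κ hκα hκA u' v' huv' hruv'
    have hvu' : r v' u' = κ := by rw [hsym]; exact hruv'
    have killer : ∀ w w' t₀ : X, w ≠ w' → r w w' = κ → t₀ ≠ w → t₀ ≠ w' →
        r w t₀ = α → r w' t₀ = α → False := by
      intro w w' t₀ k0 k00 k1 k2 k3 k4
      have htri := tri_mem r k0 (Ne.symm k2) (Ne.symm k1)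
      rw [k00, k4, k3, ms_rot] at htri
      exact hκA htri
    by_cases hu'tri : u' = x ∨ u' = y ∨ u' = z
    · by_cases hv'tri : v' = x ∨ v' = y ∨ v' = z
      · exfalso
        rcases hu'tri with rfl | rfl | rfl <;> rcases hv'tri with rfl | rfl | rfl
        · exact huv' rfl
        · exact hκα (hruv'.symm.trans exy)
        · exact hκα (hruv'.symm.trans exz)
        · exact hκα (hruv'.symm.trans (by rw [hsym]; exact exy))
        · exact huv' rfl
        · exact hκα (hruv'.symm.trans eyz)
        · exact hκα (hruv'.symm.trans (by rw [hsym]; exact exz))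
        · exact hκα (hruv'.symm.trans (by rw [hsym]; exact eyz))
        · exact huv' rfl
      · push_neg at hv'tri
        refine ⟨v', u', Ne.symm huv', hvu', ?_, hv'tri.1, hv'tri.2.1, hv'tri.2.2⟩
        intro hTwo
        rcases hu'tri with rfl | rfl | rfl <;> rcases hTwo with ⟨k1, k2⟩ | ⟨k1, k2⟩ | ⟨k1, k2⟩
        · exact killer u' v' y huv' hruv' (Ne.symm hxy) (Ne.symm hv'tri.2.1) exy k2
        · exact killer u' v' z huv' hruv' (Ne.symm hxz) (Ne.symm hv'tri.2.2) exz k2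
        · exact killer u' v' y huv' hruv' (Ne.symm hxy) (Ne.symm hv'tri.2.1) exy k1
        · exact killer u' v' x huv' hruv' hxy (Ne.symm hv'tri.1) (by rw [hsym]; exact exy) k1
        · exact killer u' v' z huv' hruv' (Ne.symm hyz) (Ne.symm hv'tri.2.2) eyz k2
        · exact killer u' v' z huv' hruv' (Ne.symm hyz) (Ne.symm hv'tri.2.2) eyz k2
        · exact killer u' v' x huv' hruv' hxz (Ne.symm hv'tri.1) (by rw [hsym]; exact exz) k1
        · exact killer u' v' x huv' hruv' hxz (Ne.symm hv'tri.1) (by rw [hsym]; exact exz) k1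
        · exact killer u' v' y huv' hruv' hyz (Ne.symm hv'tri.2.1) (by rw [hsym]; exact eyz) k1
    · push_neg at hu'tri
      by_cases hv'tri : v' = x ∨ v' = y ∨ v' = z
      · refine ⟨u', v', huv', hruv', ?_, hu'tri.1, hu'tri.2.1, hu'tri.2.2⟩
        intro hTwo
        rcases hv'tri with rfl | rfl | rfl <;> rcases hTwo with ⟨k1, k2⟩ | ⟨k1, k2⟩ | ⟨k1, k2⟩
        · exact killer v' u' y (Ne.symm huv') hvu' (Ne.symm hxy) (Ne.symm hu'tri.2.1) exy k2
        · exact killer v' u' z (Ne.symm huv') hvu' (Ne.symm hxz) (Ne.symm hu'tri.2.2) exz k2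
        · exact killer v' u' y (Ne.symm huv') hvu' (Ne.symm hxy) (Ne.symm hu'tri.2.1) exy k1
        · exact killer v' u' x (Ne.symm huv') hvu' hxy (Ne.symm hu'tri.1) (by rw [hsym]; exact exy) k1
        · exact killer v' u' z (Ne.symm huv') hvu' (Ne.symm hyz) (Ne.symm hu'tri.2.2) eyz k2
        · exact killer v' u' z (Ne.symm huv') hvu' (Ne.symm hyz) (Ne.symm hu'tri.2.2) eyz k2
        · exact killer v' u' x (Ne.symm huv') hvu' hxz (Ne.symm hu'tri.1) (by rw [hsym]; exact exz) k1
        · exact killer v' u' x (Ne.symm huv') hvu' hxz (Ne.symm hu'tri.1) (by rw [hsym]; exact exz) k1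
        · exact killer v' u' y (Ne.symm huv') hvu' hyz (Ne.symm hu'tri.2.1) (by rw [hsym]; exact eyz) k1
      · push_neg at hv'tri
        by_cases hTwoU : (r u' x = α ∧ r u' y = α) ∨ (r u' x = α ∧ r u' z = α) ∨
            (r u' y = α ∧ r u' z = α)
        · refine ⟨v', u', Ne.symm huv', hvu', ?_, hv'tri.1, hv'tri.2.1, hv'tri.2.2⟩
          intro hTwoV
          have hcomm : (r u' x = α ∧ r v' x = α) ∨ (r u' y = α ∧ r v' y = α) ∨
              (r u' z = α ∧ r v' z = α) := by tauto
          rcases hcomm with ⟨k1, k2⟩ | ⟨k1, k2⟩ | ⟨k1, k2⟩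
          · exact killer u' v' x huv' hruv' (Ne.symm hu'tri.1) (Ne.symm hv'tri.1) k1 k2
          · exact killer u' v' y huv' hruv' (Ne.symm hu'tri.2.1) (Ne.symm hv'tri.2.1) k1 k2
          · exact killer u' v' z huv' hruv' (Ne.symm hu'tri.2.2) (Ne.symm hv'tri.2.2) k1 k2
        · exact ⟨u', v', huv', hruv', hTwoU, hu'tri.1, hu'tri.2.1, hu'tri.2.2⟩
  -- hb2 : two-value zero-alpha profiles are impossible
  have hb2 : ∀ n m : C, n ≠ α → m ≠ α → n ≠ m → ({α,n,n} : Multiset C) ∈ A3 r →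
      ({α,m,n} : Multiset C) ∈ A3 r → False := by
    intro n m hnα hmα hnm hA1 hA2
    have e1 : ({α,n,n} : Multiset C) = T3 ∨ ({α,n,n} : Multiset C) = T4 := by
      rcases hMem _ hA1 with h | h | h | h
      · exact absurd (K5 h) hnα
      · exact (K5b hβα h).elim
      · exact Or.inl h
      · exact Or.inr h
    have e2 : ({α,m,n} : Multiset C) = T3 ∨ ({α,m,n} : Multiset C) = T4 := by
      rcases hMem _ hA2 with h | h | h | h
      · exact absurd (K11 h) hmα
      · exact (K12 hαβ hmα hnα h).elim
      · exact Or.inl h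
      · exact Or.inr h
    have hneq : ({α,n,n} : Multiset C) ≠ ({α,m,n} : Multiset C) := by
      intro h
      rcases pair_eq.mp (Kgen hmα hnα h) with ⟨h1, _⟩ | ⟨_, h2⟩
      · exact hnm h1
      · exact hnm h2
    have hT3cases : T3 = ({α,n,n} : Multiset C) ∨ T3 = ({α,m,n} : Multiset C) := by
      rcases e1 with h | h
      · exact Or.inl h.symm
      · rcases e2 with h' | h'
        · exact Or.inr h'.symm
        · exact absurd (h.trans h'.symm) hneq
    have hT4cases : T4 = ({α,n,n} : Multiset C) ∨ T4 = ({α,m,n} : Multiset C) := by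
      rcases e1 with h | h
      · rcases e2 with h' | h'
        · exact absurd (h.trans h'.symm) hneq
        · exact Or.inr h'.symm
      · exact Or.inl h.symm
    have memnm : ∀ d : C, d ≠ α → d ∈ T3 ∨ d ∈ T4 → d = n ∨ d = m := by
      intro d hdα hd
      rcases hd with hd | hd
      · rcases hT3cases with h | h <;> rw [h, mem_triple] at hd <;> tauto
      · rcases hT4cases with h | h <;> rw [h, mem_triple] at hd <;> tauto
    have hβnm := memnm β hβα (Or.inl hβT3)
    have hcnm := memnm c hcα (hcov c hcIm hcα hcβ)
    have henm := memnm e heα (hcov e heIm heα heβ)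
    rcases hβnm with hβ' | hβ' <;> rcases hcnm with hc' | hc' <;> rcases henm with he' | he'
    · exact hcβ (hc'.trans hβ'.symm)
    · exact hcβ (hc'.trans hβ'.symm)
    · exact heβ (he'.trans hβ'.symm)
    · exact hec (he'.trans hc'.symm)
    · exact hec (he'.trans hc'.symm)
    · exact heβ (he'.trans hβ'.symm)
    · exact hcβ (hc'.trans hβ'.symm)
    · exact hcβ (hc'.trans hβ'.symm)
  -- CLASS
  have hκα := hκCα
  have hκβ := hκCβ
  obtain ⟨u0, v0, h0, hr0⟩ := hκIm
  obtain ⟨a, b, hab, hrab, hnTwo, hax, hay, haz⟩ := hNR κ hκα hκA u0 v0 h0 hr0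
  have A1 : ({α, r a y, r a x} : Multiset C) ∈ A3 r := by
    have := tri_mem r hxy (Ne.symm hay) (Ne.symm hax)
    rwa [exy, hsym y a, hsym x a] at this
  have A2 : ({α, r a z, r a x} : Multiset C) ∈ A3 r := by
    have := tri_mem r hxz (Ne.symm haz) (Ne.symm hax)
    rwa [exz, hsym z a, hsym x a] at this
  have A3' : ({α, r a z, r a y} : Multiset C) ∈ A3 r := by
    have := tri_mem r hyz (Ne.symm haz) (Ne.symm hay)
    rwa [eyz, hsym z a, hsym y a] at this
  have FIN : ({α,β,β} : Multiset C) ∈ A3 r → ∀ tA tB : X, a ≠ tA → a ≠ tB →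
      r a tA = α → r a tB = β → False := by
    intro hTbb tA tB haA haB hrA hrB
    have hbtA : b ≠ tA := fun h => hκα (by rw [← hrab, h]; exact hrA)
    have hbtB : b ≠ tB := fun h => hκβ (by rw [← hrab, h]; exact hrB)
    have hbb : ({α,β,β} : Multiset C) = T3 ∨ ({α,β,β} : Multiset C) = T4 := by
      rcases hMem _ hTbb with h | h | h | h
      · exact absurd (K1 h) hβα
      · exact (K2 hβα h).elim
      · exact Or.inl h
      · exact Or.inr h
    have key : ∀ S : Multiset C, S ∈ A3 r → (∀ M ∈ A3 r, κ ∈ M → M = S) →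
        c ∈ S → e ∈ S → False := by
      intro S hSA huniq hcS heS
      obtain ⟨η, hSeq⟩ : ∃ η, S = ({c, e, η} : Multiset C) := by
        obtain ⟨p1, q1, w1, d1, d2, d3, hf⟩ := hSA
        rw [hf] at hcS heS ⊢
        exact extract_two hcS heS hce
      have h1 := tri_mem r hab hbtA haA
      rw [hrab, hrA] at h1
      have h1' := huniq _ h1 (by rw [mem_triple]; tauto)
      rw [hSeq] at h1'
      have hαmem : α ∈ ({c,e,η} : Multiset C) := by rw [← h1', mem_triple]; tauto
      rw [mem_triple] at hαmem
      have hηα : η = α := by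
        rcases hαmem with h | h | h
        · exact (hαc h).elim
        · exact (hαe h).elim
        · exact h.symm
      have h2 := tri_mem r hab hbtB haB
      rw [hrab, hrB] at h2
      have h2' := huniq _ h2 (by rw [mem_triple]; tauto)
      rw [hSeq] at h2'
      have hβmem : β ∈ ({c,e,η} : Multiset C) := by rw [← h2', mem_triple]; tauto
      rw [mem_triple] at hβmem
      rcases hβmem with h | h | h
      · exact hβc h
      · exact hβe h
      · exact hβα (h.trans hηα)
    rcases hbb with hbb | hbb
    · refine key T4 hT4A ?_ ?_ ?_
      · intro M hM hκM
        rcases hMem _ hM with h | h | h | h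
        · exfalso; rw [h, mem_triple] at hκM; rcases hκM with h'|h'|h' <;> exact hκα h'
        · exfalso; rw [h, mem_triple] at hκM
          rcases hκM with h'|h'|h'
          · exact hκα h'
          · exact hκα h'
          · exact hκβ h'
        · exfalso; rw [h, ← hbb, mem_triple] at hκM
          rcases hκM with h'|h'|h'
          · exact hκα h'
          · exact hκβ h'
          · exact hκβ h'
        · exact h
      · rcases hcov c hcIm hcα hcβ with h | h
        · exfalso; rw [← hbb, mem_triple] at h
          rcases h with h'|h'|h'
          · exact hcα h'
          · exact hcβ h'
          · exact hcβ h'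
        · exact h
      · rcases hcov e heIm heα heβ with h | h
        · exfalso; rw [← hbb, mem_triple] at h
          rcases h with h'|h'|h'
          · exact heα h'
          · exact heβ h'
          · exact heβ h'
        · exact h
    · refine key T3 hT3A ?_ ?_ ?_
      · intro M hM hκM
        rcases hMem _ hM with h | h | h | h
        · exfalso; rw [h, mem_triple] at hκM; rcases hκM with h'|h'|h' <;> exact hκα h'
        · exfalso; rw [h, mem_triple] at hκM
          rcases hκM with h'|h'|h'
          · exact hκα h'
          · exact hκα h'
          · exact hκβ h'
        · exact h
        · exfalso; rw [h, ← hbb, mem_triple] at hκM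
          rcases hκM with h'|h'|h'
          · exact hκα h'
          · exact hκβ h'
          · exact hκβ h'
      · rcases hcov c hcIm hcα hcβ with h | h
        · exact h
        · exfalso; rw [← hbb, mem_triple] at h
          rcases h with h'|h'|h'
          · exact hcα h'
          · exact hcβ h'
          · exact hcβ h'
      · rcases hcov e heIm heα heβ with h | h
        · exact h
        · exfalso; rw [← hbb, mem_triple] at h
          rcases h with h'|h'|h'
          · exact heα h'
          · exact heβ h'
          · exact heβ h'
  by_cases hpα : r a x = α
  · have hq : r a y = β := by
      rcases hP1 x y a hxy hax hay exy hpα with h | h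
      · exact absurd (Or.inl ⟨hpα, h⟩) hnTwo
      · exact h
    have hs : r a z = β := by
      rcases hP1 x z a hxz hax haz exz hpα with h | h
      · exact absurd (Or.inr (Or.inl ⟨hpα, h⟩)) hnTwo
      · exact h
    exact (FIN (by rwa [hs, hq] at A3') x y hax hay hpα hq).elim
  by_cases hqα : r a y = α
  · have hp : r a x = β := by
      rcases hP1 y x a (Ne.symm hxy) hay hax
          (by rw [hsym]; exact exy) hqα with h | h
      · exact absurd (Or.inl ⟨h, hqα⟩) hnTwo
      · exact h
    have hs : r a z = β := by
      rcases hP1 y z a hyz hay haz eyz hqα with h | h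
      · exact absurd (Or.inr (Or.inr ⟨hqα, h⟩)) hnTwo
      · exact h
    exact (FIN (by rwa [hs, hp] at A2) y x hay hax hqα hp).elim
  by_cases hsα : r a z = α
  · have hp : r a x = β := by
      rcases hP1 z x a (Ne.symm hxz) haz hax
          (by rw [hsym]; exact exz) hsα with h | h
      · exact absurd (Or.inr (Or.inl ⟨h, hsα⟩)) hnTwo
      · exact h
    have hq : r a y = β := by
      rcases hP1 z y a (Ne.symm hyz) haz hay
          (by rw [hsym]; exact eyz) hsα with h | h
      · exact absurd (Or.inr (Or.inr ⟨h, hsα⟩)) hnTwo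
      · exact h
    exact (FIN (by rwa [hq, hp] at A1) z x haz hax hsα hp).elim
  · -- zero-alpha profile
    by_cases hpq : r a x = r a y
    · by_cases hps : r a x = r a z
      · refine ⟨a, b, r a x, hab, hrab, hax, hay, haz, rfl, hpq.symm, hps.symm, hpα,
          ?_, ?_⟩
        · have h := A1
          rw [← hpq] at h
          exact h
        · by_cases hbx : b = x
          · exact Or.inl (by rw [← hrab, hbx])
          by_cases hby : b = y
          · exact Or.inl (by rw [← hrab, hby]; exact hpq)
          by_cases hbz : b = z
          · exact Or.inl (by rw [← hrab, hbz]; exact hps)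
          · exact Or.inr ⟨hbx, hby, hbz⟩
      · refine (hb2 (r a x) (r a z) hpα hsα hps ?_ A2).elim
        have h := A1
        rw [← hpq] at h
        exact h
    · by_cases hps : r a x = r a z
      · refine (hb2 (r a x) (r a y) hpα hqα hpq ?_ A1).elim
        have h := A2
        rw [← hps] at h
        exact h
      · by_cases hqs : r a y = r a z
        · refine (hb2 (r a y) (r a x) hqα hpα (fun h => hpq h.symm) ?_ ?_).elim
          · have h := A3'
            rw [← hqs] at h
            exact h
          · have h := A1
            rw [ms_swap23] at h
            exact h
        · -- all three pair types distinct : impossible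
          have mk : ∀ w1 w2 : C, w1 ≠ α → w2 ≠ α → ({α,w1,w2} : Multiset C) ∈ A3 r →
              ({α,w1,w2} : Multiset C) = T3 ∨ ({α,w1,w2} : Multiset C) = T4 := by
            intro w1 w2 h1 h2 hA
            rcases hMem _ hA with h | h | h | h
            · exact absurd (K11 h) h1
            · exact (K12 hαβ h1 h2 h).elim
            · exact Or.inl h
            · exact Or.inr h
          have e1 := mk _ _ hqα hpα A1
          have e2 := mk _ _ hsα hpα A2
          have e3 := mk _ _ hsα hqα A3'
          have pair12 : ({α, r a y, r a x} : Multiset C) = {α, r a z, r a x} → False := by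
            intro h
            rcases pair_eq.mp (Kgen hsα hpα h) with ⟨h1, _⟩ | ⟨h1, h2⟩
            · exact hqs h1
            · exact hpq h1.symm
          have pair13 : ({α, r a y, r a x} : Multiset C) = {α, r a z, r a y} → False := by
            intro h
            rcases pair_eq.mp (Kgen hsα hqα h) with ⟨h1, _⟩ | ⟨_, h2⟩
            · exact hqs h1
            · exact hps h2
          have pair23 : ({α, r a z, r a x} : Multiset C) = {α, r a z, r a y} → False := by
            intro h
            rcases pair_eq.mp (Kgen hsα hqα h) with ⟨_, h2⟩ | ⟨h1, _⟩
            · exact hpq h2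
            · exact hqs h1.symm
          exfalso
          rcases e1 with e1 | e1 <;> rcases e2 with e2 | e2 <;> rcases e3 with e3 | e3
          · exact pair12 (e1.trans e2.symm)
          · exact pair12 (e1.trans e2.symm)
          · exact pair13 (e1.trans e3.symm)
          · exact pair23 (e2.trans e3.symm)
          · exact pair23 (e2.trans e3.symm)
          · exact pair13 (e1.trans e3.symm)
          · exact pair12 (e1.trans e2.symm)
          · exact pair12 (e1.trans e2.symm)

theorem caseIIB [Fintype X] (hsym : ∀ x y, r x y = r y x) {α β c e : C} {T3 T4 : Multiset C}
    {x y z : X} (hxy : x ≠ y) (hyz : y ≠ z) (hxz : x ≠ z)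
    (exy : r x y = α) (eyz : r y z = α) (exz : r x z = α)
    (hβα : β ≠ α) (hcα : c ≠ α) (hcβ : c ≠ β)
    (heα : e ≠ α) (heβ : e ≠ β) (hec : e ≠ c)
    (hcIm : c ∈ colorIm r) (heIm : e ∈ colorIm r)
    (hΦeq : colorIm r = {α, β, c, e})
    (hA3eq : A3 r = {({α,α,α} : Multiset C), ({α,α,β} : Multiset C), T3, T4})
    (hβT3 : β ∈ T3)
    (hN : ∀ d : C, ({α,α,d} : Multiset C) ∈ A3 r → d = α ∨ d = β)
    (hcA : ({α,α,c} : Multiset C) ∉ A3 r) : False := by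
  have hαβ : α ≠ β := Ne.symm hβα
  have hαc : α ≠ c := Ne.symm hcα
  have hβc : β ≠ c := Ne.symm hcβ
  have hαe : α ≠ e := Ne.symm heα
  have hβe : β ≠ e := Ne.symm heβ
  have hce : c ≠ e := Ne.symm hec
  have hMem : ∀ m ∈ A3 r, m = {α,α,α} ∨ m = {α,α,β} ∨ m = T3 ∨ m = T4 := fun m hm => by
    rw [hA3eq] at hm; simpa using hm
  have hT3A : T3 ∈ A3 r := by rw [hA3eq]; simp
  have hT4A : T4 ∈ A3 r := by rw [hA3eq]; simp
  have third : ∀ p q : X, ∃ w, w ≠ p ∧ w ≠ q ∧ (w = x ∨ w = y ∨ w = z) := by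
    intro p q
    by_cases hxp : x = p
    · subst hxp
      by_cases hyq : y = q
      · subst hyq
        exact ⟨z, Ne.symm hxz, Ne.symm hyz, by tauto⟩
      · exact ⟨y, Ne.symm hxy, hyq, by tauto⟩
    · by_cases hxq : x = q
      · subst hxq
        by_cases hyp : y = p
        · subst hyp
          exact ⟨z, Ne.symm hyz, Ne.symm hxz, by tauto⟩
        · exact ⟨y, hyp, Ne.symm hxy, by tauto⟩
      · exact ⟨x, hxp, hxq, by tauto⟩
  have hcov : ∀ d : C, d ∈ colorIm r → d ≠ α → d ≠ β → d ∈ T3 ∨ d ∈ T4 := by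
    intro d hdIm hdα hdβ
    obtain ⟨p, q, hpq, hrpq⟩ := hdIm
    obtain ⟨w, hwp, hwq, _⟩ := third p q
    have htri := tri_mem r hpq (Ne.symm hwq) (Ne.symm hwp)
    rw [hrpq] at htri
    rcases hMem _ htri with h | h | h | h
    · rw [triple_eq'] at h; exfalso; tauto
    · rw [triple_eq'] at h; exfalso; tauto
    · exact Or.inl (h ▸ (by rw [mem_triple]; tauto : d ∈ ({d, r q w, r p w} : Multiset C)))
    · exact Or.inr (h ▸ (by rw [mem_triple]; tauto : d ∈ ({d, r q w, r p w} : Multiset C)))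
  have heA : ({α,α,e} : Multiset C) ∉ A3 r := by
    intro h
    rcases hN _ h with h' | h'
    · exact heα h'
    · exact heβ h'
  obtain ⟨a, b, m, hab, hrab, hax, hay, haz, hmx, hmy, hmz, hmα, hαmm, hbr⟩ :=
    classLemma r hsym hxy hyz hxz exy eyz exz hβα hcα hcβ heα heβ hec hcIm heIm hA3eq hβT3 hN
      c hcIm hcα hcβ hcA
  have hmIm : m ∈ colorIm r := ⟨a, x, hax, hmx⟩
  have hm4 : m = β ∨ m = c ∨ m = e := by
    have hmem : m ∈ ({α, β, c, e} : Set C) := by rw [← hΦeq]; exact hmIm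
    simp only [Set.mem_insert_iff, Set.mem_singleton_iff] at hmem
    rcases hmem with h | h | h | h
    · exact absurd h hmα
    · exact Or.inl h
    · exact Or.inr (Or.inl h)
    · exact Or.inr (Or.inr h)
  rcases hm4 with hm | hm | hm
  · -- m = β
    rw [hm] at hmx hmy hmz hαmm hbr
    have hb' : b ≠ x ∧ b ≠ y ∧ b ≠ z := by
      rcases hbr with h | h
      · exact absurd h.symm hcβ
      · exact h
    have hbb : ({α,β,β} : Multiset C) = T3 ∨ ({α,β,β} : Multiset C) = T4 := by
      rcases hMem _ hαmm with h | h | h | h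
      · exact absurd (K1 h) hβα
      · exact (K2 hβα h).elim
      · exact Or.inl h
      · exact Or.inr h
    have key2 : ∀ S : Multiset C, S ∈ A3 r → (∀ M ∈ A3 r, c ∈ M → M = S) →
        (∀ M ∈ A3 r, M = {α,α,α} ∨ M = {α,α,β} ∨ M = {α,β,β} ∨ M = S) →
        c ∈ S → e ∈ S → False := by
      intro S hSA huniq hM4 hcS heS
      obtain ⟨η, hSeq⟩ : ∃ η, S = ({c, e, η} : Multiset C) := by
        obtain ⟨p1, q1, w1, d1, d2, d3, hf⟩ := hSA
        rw [hf] at hcS heS ⊢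
        exact extract_two hcS heS hce
      have h1 := tri_mem r hab hb'.1 hax
      rw [hrab, hmx] at h1
      have h1' := huniq _ h1 (by rw [mem_triple]; tauto)
      rw [hSeq] at h1'
      have hβmem : β ∈ ({c,e,η} : Multiset C) := by rw [← h1', mem_triple]; tauto
      rw [mem_triple] at hβmem
      have hηβ : η = β := by
        rcases hβmem with h | h | h
        · exact (hβc h).elim
        · exact (hβe h).elim
        · exact h.symm
      rw [hηβ] at h1'
      have hrbx : r b x = e := by
        rcases pair_eq.mp (cancel1 h1') with ⟨h', _⟩ | ⟨_, h''⟩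
        · exact h'
        · exact (hβe h'').elim
      have h2 := tri_mem r hab hb'.2.1 hay
      rw [hrab, hmy] at h2
      have h2' := huniq _ h2 (by rw [mem_triple]; tauto)
      rw [hSeq, hηβ] at h2'
      have hrby : r b y = e := by
        rcases pair_eq.mp (cancel1 h2') with ⟨h', _⟩ | ⟨_, h''⟩
        · exact h'
        · exact (hβe h'').elim
      have htri := tri_mem r hxy (Ne.symm hb'.2.1) (Ne.symm hb'.1)
      rw [exy, hsym y b, hrby, hsym x b, hrbx] at htri
      rcases hM4 _ htri with h | h | h | h
      · exact heα (K5 h)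
      · exact K5b hβα h
      · rcases pair_eq.mp (Kgen hβα hβα h) with ⟨h', _⟩ | ⟨h', _⟩ <;> exact heβ h'
      · rw [hSeq, hηβ] at h
        exact Khead hαc hαe hαβ h
    rcases hbb with hbb | hbb
    · refine key2 T4 hT4A ?_ ?_ ?_ ?_
      · intro M hM hcM
        rcases hMem _ hM with h | h | h | h
        · exfalso; rw [h, mem_triple] at hcM
          rcases hcM with h'|h'|h' <;> exact hcα h'
        · exfalso; rw [h, mem_triple] at hcM
          rcases hcM with h'|h'|h'
          · exact hcα h'
          · exact hcα h'
          · exact hcβ h'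
        · exfalso; rw [h, ← hbb, mem_triple] at hcM
          rcases hcM with h'|h'|h'
          · exact hcα h'
          · exact hcβ h'
          · exact hcβ h'
        · exact h
      · intro M hM
        rcases hMem _ hM with h | h | h | h
        · tauto
        · tauto
        · exact Or.inr (Or.inr (Or.inl (h.trans hbb.symm)))
        · tauto
      · rcases hcov c hcIm hcα hcβ with h | h
        · exfalso; rw [← hbb, mem_triple] at h
          rcases h with h'|h'|h'
          · exact hcα h'
          · exact hcβ h'
          · exact hcβ h'
        · exact h
      · rcases hcov e heIm heα heβ with h | h
        · exfalso; rw [← hbb, mem_triple] at h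
          rcases h with h'|h'|h'
          · exact heα h'
          · exact heβ h'
          · exact heβ h'
        · exact h
    · refine key2 T3 hT3A ?_ ?_ ?_ ?_
      · intro M hM hcM
        rcases hMem _ hM with h | h | h | h
        · exfalso; rw [h, mem_triple] at hcM
          rcases hcM with h'|h'|h' <;> exact hcα h'
        · exfalso; rw [h, mem_triple] at hcM
          rcases hcM with h'|h'|h'
          · exact hcα h'
          · exact hcα h'
          · exact hcβ h'
        · exact h
        · exfalso; rw [h, ← hbb, mem_triple] at hcM
          rcases hcM with h'|h'|h'
          · exact hcα h'
          · exact hcβ h'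
          · exact hcβ h'
      · intro M hM
        rcases hMem _ hM with h | h | h | h
        · tauto
        · tauto
        · tauto
        · exact Or.inr (Or.inr (Or.inl (h.trans hbb.symm)))
      · rcases hcov c hcIm hcα hcβ with h | h
        · exact h
        · exfalso; rw [← hbb, mem_triple] at h
          rcases h with h'|h'|h'
          · exact hcα h'
          · exact hcβ h'
          · exact hcβ h'
      · rcases hcov e heIm heα heβ with h | h
        · exact h
        · exfalso; rw [← hbb, mem_triple] at h
          rcases h with h'|h'|h'
          · exact heα h'
          · exact heβ h'
          · exact heβ h'
  · -- m = c
    rw [hm] at hmx hmy hmz hαmm hbr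
    have hTcc : T4 = ({α,c,c} : Multiset C) := by
      rcases hMem _ hαmm with h | h | h | h
      · exact absurd (K5 h) hcα
      · exact (K5b hβα h).elim
      · exfalso; rw [← h, mem_triple] at hβT3
        rcases hβT3 with h' | h' | h'
        · exact hβα h'
        · exact hβc h'
        · exact hβc h'
      · exact h.symm
    have heT3 : e ∈ T3 := by
      rcases hcov e heIm heα heβ with h | h
      · exact h
      · exfalso; rw [hTcc, mem_triple] at h
        rcases h with h' | h' | h'
        · exact heα h'
        · exact hec h'
        · exact hec h'
    obtain ⟨θ, hT3eq⟩ : ∃ θ, T3 = ({β, e, θ} : Multiset C) := by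
      obtain ⟨p1, q1, w1, d1, d2, d3, hf⟩ := hT3A
      rw [hf] at hβT3 heT3 ⊢
      exact extract_two hβT3 heT3 hβe
    obtain ⟨a', b', m', hab', hrab', hax', hay', haz', hmx', hmy', hmz', hmα', hαmm', hbr'⟩ :=
      classLemma r hsym hxy hyz hxz exy eyz exz hβα hcα hcβ heα heβ hec hcIm heIm hA3eq hβT3 hN
        e heIm heα heβ heA
    have hm'c : m' = c := by
      rcases hMem _ hαmm' with h | h | h | h
      · exact absurd (K5 h) hmα'
      · exact (K5b hβα h).elim
      · rw [hT3eq] at h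
        exact (K16 hαβ hαe hβe h).elim
      · rw [hTcc] at h
        rcases pair_eq.mp (Kgen hcα hcα h) with ⟨h', _⟩ | ⟨h', _⟩ <;> exact h'
    rw [hm'c] at hmx' hmy' hmz' hbr'
    have hb'' : b' ≠ x ∧ b' ≠ y ∧ b' ≠ z := by
      rcases hbr' with h | h
      · exact absurd h hce
      · exact h
    have hT3' : T3 = ({β, e, c} : Multiset C) := by
      have h1 := tri_mem r hab' hb''.1 hax'
      rw [hrab', hmx'] at h1
      rcases hMem _ h1 with h | h | h | h
      · exact (Khead heα heα heα h).elim
      · exact (Khead heα heα heβ h).elim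
      · rw [hT3eq] at h
        have hc' : c ∈ ({β, e, θ} : Multiset C) := by rw [← h, mem_triple]; tauto
        rw [mem_triple] at hc'
        rcases hc' with h' | h' | h'
        · exact (hcβ h').elim
        · exact (hce h').elim
        · rw [hT3eq, ← h']
      · rw [hTcc] at h
        exact (Khead heα hec hec h).elim
    have step : ∀ t : X, b' ≠ t → a' ≠ t → r a' t = c → r b' t = β := by
      intro t hbt hat hatc
      have h1 := tri_mem r hab' hbt hat
      rw [hrab', hatc] at h1
      rcases hMem _ h1 with h | h | h | h
      · exact (Khead heα heα heα h).elim
      · exact (Khead heα heα heβ h).elim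
      · rw [hT3'] at h
        rw [ms_swap12 (a := β) (b := e)] at h
        rcases pair_eq.mp (cancel1 h) with ⟨h', _⟩ | ⟨_, h''⟩
        · exact h'
        · exact (hcβ h'').elim
      · rw [hTcc] at h
        exact (Khead heα hec hec h).elim
    have hrbx := step x hb''.1 hax' hmx'
    have hrby := step y hb''.2.1 hay' hmy'
    have htri := tri_mem r hxy (Ne.symm hb''.2.1) (Ne.symm hb''.1)
    rw [exy, hsym y b', hrby, hsym x b', hrbx] at htri
    rcases hMem _ htri with h | h | h | h
    · exact hβα (K1 h)
    · exact K2 hβα h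
    · rw [hT3'] at h
      exact K3 hαβ hαe hβe h
    · rw [hTcc] at h
      rcases pair_eq.mp (Kgen hcα hcα h) with ⟨h', _⟩ | ⟨h', _⟩ <;> exact hβc h'
  · -- m = e
    rw [hm] at hmx hmy hmz hαmm hbr
    have hb' : b ≠ x ∧ b ≠ y ∧ b ≠ z := by
      rcases hbr with h | h
      · exact absurd h hec
      · exact h
    have hTee : T4 = ({α,e,e} : Multiset C) := by
      rcases hMem _ hαmm with h | h | h | h
      · exact absurd (K5 h) heα
      · exact (K5b hβα h).elim
      · exfalso; rw [← h, mem_triple] at hβT3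
        rcases hβT3 with h' | h' | h'
        · exact hβα h'
        · exact hβe h'
        · exact hβe h'
      · exact h.symm
    have hcT3 : c ∈ T3 := by
      rcases hcov c hcIm hcα hcβ with h | h
      · exact h
      · exfalso; rw [hTee, mem_triple] at h
        rcases h with h' | h' | h'
        · exact hcα h'
        · exact hce h'
        · exact hce h'
    obtain ⟨θ, hT3eq⟩ : ∃ θ, T3 = ({β, c, θ} : Multiset C) := by
      obtain ⟨p1, q1, w1, d1, d2, d3, hf⟩ := hT3A
      rw [hf] at hβT3 hcT3 ⊢
      exact extract_two hβT3 hcT3 hβc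
    have hT3' : T3 = ({β, c, e} : Multiset C) := by
      have h1 := tri_mem r hab hb'.1 hax
      rw [hrab, hmx] at h1
      rcases hMem _ h1 with h | h | h | h
      · exact (Khead hcα hcα hcα h).elim
      · exact (Khead hcα hcα hcβ h).elim
      · rw [hT3eq] at h
        have he' : e ∈ ({β, c, θ} : Multiset C) := by rw [← h, mem_triple]; tauto
        rw [mem_triple] at he'
        rcases he' with h' | h' | h'
        · exact (heβ h').elim
        · exact (hec h').elim
        · rw [hT3eq, ← h']
      · rw [hTee] at h
        exact (Khead hcα hce hce h).elim
    have step : ∀ t : X, b ≠ t → a ≠ t → r a t = e → r b t = β := by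
      intro t hbt hat hate
      have h1 := tri_mem r hab hbt hat
      rw [hrab, hate] at h1
      rcases hMem _ h1 with h | h | h | h
      · exact (Khead hcα hcα hcα h).elim
      · exact (Khead hcα hcα hcβ h).elim
      · rw [hT3'] at h
        rw [ms_swap12 (a := β) (b := c)] at h
        rcases pair_eq.mp (cancel1 h) with ⟨h', _⟩ | ⟨_, h''⟩
        · exact h'
        · exact (hβe h''.symm).elim
      · rw [hTee] at h
        exact (Khead hcα hce hce h).elim
    have hrbx := step x hb'.1 hax hmx
    have hrby := step y hb'.2.1 hay hmy
    have htri := tri_mem r hxy (Ne.symm hb'.2.1) (Ne.symm hb'.1)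
    rw [exy, hsym y b, hrby, hsym x b, hrbx] at htri
    rcases hMem _ htri with h | h | h | h
    · exact hβα (K1 h)
    · exact K2 hβα h
    · rw [hT3'] at h
      exact K3 hαβ hαc hβc h
    · rw [hTee] at h
      rcases pair_eq.mp (Kgen heα heα h) with ⟨h', _⟩ | ⟨h', _⟩ <;> exact hβe h'

theorem caseII [Fintype X] (hsym : ∀ x y, r x y = r y x) {α β c e : C} {T3 T4 : Multiset C}
    {x y z : X} (hxy : x ≠ y) (hyz : y ≠ z) (hxz : x ≠ z)
    (exy : r x y = α) (eyz : r y z = α) (exz : r x z = α)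
    (hβα : β ≠ α) (hcα : c ≠ α) (hcβ : c ≠ β)
    (heα : e ≠ α) (heβ : e ≠ β) (hec : e ≠ c)
    (hcIm : c ∈ colorIm r) (heIm : e ∈ colorIm r)
    (hΦeq : colorIm r = {α, β, c, e})
    (hA3eq : A3 r = {({α,α,α} : Multiset C), ({α,α,β} : Multiset C), T3, T4})
    (hβT3 : β ∈ T3)
    (hcA : ({α,α,c} : Multiset C) ∉ A3 r) : False := by
  have hαβ : α ≠ β := Ne.symm hβα
  have hαc : α ≠ c := Ne.symm hcα
  have hβc : β ≠ c := Ne.symm hcβ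
  have hαe : α ≠ e := Ne.symm heα
  have hβe : β ≠ e := Ne.symm heβ
  have hce : c ≠ e := Ne.symm hec
  have hMem : ∀ m ∈ A3 r, m = {α,α,α} ∨ m = {α,α,β} ∨ m = T3 ∨ m = T4 := fun m hm => by
    rw [hA3eq] at hm; simpa using hm
  have hT3A : T3 ∈ A3 r := by rw [hA3eq]; simp
  have hT4A : T4 ∈ A3 r := by rw [hA3eq]; simp
  have third : ∀ p q : X, ∃ w, w ≠ p ∧ w ≠ q ∧ (w = x ∨ w = y ∨ w = z) := by
    intro p q
    by_cases hxp : x = p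
    · subst hxp
      by_cases hyq : y = q
      · subst hyq
        exact ⟨z, Ne.symm hxz, Ne.symm hyz, by tauto⟩
      · exact ⟨y, Ne.symm hxy, hyq, by tauto⟩
    · by_cases hxq : x = q
      · subst hxq
        by_cases hyp : y = p
        · subst hyp
          exact ⟨z, Ne.symm hyz, Ne.symm hxz, by tauto⟩
        · exact ⟨y, hyp, Ne.symm hxy, by tauto⟩
      · exact ⟨x, hxp, hxq, by tauto⟩
  have hcov : ∀ d : C, d ∈ colorIm r → d ≠ α → d ≠ β → d ∈ T3 ∨ d ∈ T4 := by
    intro d hdIm hdα hdβ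
    obtain ⟨p, q, hpq, hrpq⟩ := hdIm
    obtain ⟨w, hwp, hwq, _⟩ := third p q
    have htri := tri_mem r hpq (Ne.symm hwq) (Ne.symm hwp)
    rw [hrpq] at htri
    rcases hMem _ htri with h | h | h | h
    · rw [triple_eq'] at h; exfalso; tauto
    · rw [triple_eq'] at h; exfalso; tauto
    · exact Or.inl (h ▸ (by rw [mem_triple]; tauto : d ∈ ({d, r q w, r p w} : Multiset C)))
    · exact Or.inr (h ▸ (by rw [mem_triple]; tauto : d ∈ ({d, r q w, r p w} : Multiset C)))
  obtain ⟨u, v, huv, hruv⟩ := hcIm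
  by_cases hIIA : ∃ d, d ≠ α ∧ d ≠ β ∧ ({α,α,d} : Multiset C) ∈ A3 r
  · obtain ⟨d, hdα, hdβ, hααd⟩ := hIIA
    have hdc : d ≠ c := fun h => hcA (h ▸ hααd)
    -- ααd must be T4
    have hd4 : ({α,α,d} : Multiset C) = T4 := by
      rcases hMem _ hααd with h | h | h | h
      · exact absurd (K8 h) hdα
      · exact absurd (K9 hβα h) hdβ
      · exfalso
        rw [← h, mem_triple] at hβT3
        rcases hβT3 with h' | h' | h'
        · exact hβα h'
        · exact hβα h'
        · exact hdβ h'.symm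
      · exact h
    -- c is in T3
    have hc3 : c ∈ T3 := by
      rcases hcov c ⟨u, v, huv, hruv⟩ hcα hcβ with h | h
      · exact h
      · exfalso
        rw [← hd4, mem_triple] at h
        rcases h with h' | h' | h'
        · exact hcα h'
        · exact hcα h'
        · exact hdc h'.symm
    obtain ⟨ζ, hT3eq⟩ : ∃ ζ, T3 = ({β, c, ζ} : Multiset C) := by
      obtain ⟨p, q, w, h1, h2, h3, hf⟩ := hT3A
      rw [hf] at hβT3 hc3 ⊢
      exact extract_two hβT3 hc3 (Ne.symm hcβ)
    -- only type containing c is T3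
    have hconly : ∀ M : Multiset C, M ∈ A3 r → c ∈ M → M = ({β, c, ζ} : Multiset C) := by
      intro M hM hcM
      rcases hMem _ hM with h | h | h | h
      · exfalso; rw [h, mem_triple] at hcM; tauto
      · exfalso; rw [h, mem_triple] at hcM; tauto
      · rw [h, hT3eq]
      · exfalso; rw [h, ← hd4, mem_triple] at hcM
        rcases hcM with h' | h' | h'
        · exact hcα h'
        · exact hcα h'
        · exact hdc h'.symm
    -- αββ is not in A3
    have hαββ : ({α,β,β} : Multiset C) ∉ A3 r := by
      intro hA
      rcases hMem _ hA with h | h | h | h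
      · exact hβα (K1 h)
      · exact K2 hβα h
      · rw [hT3eq] at h; exact K3 hαβ hαc hβc h
      · rw [← hd4] at h; exact K4 hβα h
    -- INT : point with two alpha edges inside a triangle and a c edge
    have INT : ∀ p q w v' : X, p ≠ q → q ≠ w → p ≠ w → v' ≠ p → v' ≠ q → v' ≠ w →
        r p q = α → r q w = α → r p w = α → r p v' = c → False := by
      intro p q w v' hpq hqw hpw hvp hvq hvw epq eqw epw epv
      have h1 := tri_mem r hpq (Ne.symm hvq) (Ne.symm hvp)
      rw [epq, epv] at h1
      have h1' := hconly _ h1 (by rw [mem_triple]; tauto)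
      -- {α, r q v', c} = {β, c, ζ}
      rw [ms_swap23 (a := α), ms_swap12 (a := α), ms_swap12 (a := β)] at h1'
      have h1'' := pair_eq.mp (cancel1 h1')
      have hζα : ζ = α := by
        rcases h1'' with ⟨h', _⟩ | ⟨h', _⟩
        · exact absurd h' hαβ
        · exact h'.symm
      have hqv : r q v' = β := by
        rcases h1'' with ⟨h', _⟩ | ⟨_, h''⟩
        · exact absurd h' hαβ
        · exact h''
      have h2 := tri_mem r hpw (Ne.symm hvw) (Ne.symm hvp)
      rw [epw, epv] at h2
      have h2' := hconly _ h2 (by rw [mem_triple]; tauto)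
      rw [ms_swap23 (a := α), ms_swap12 (a := α), ms_swap12 (a := β)] at h2'
      have h2'' := pair_eq.mp (cancel1 h2')
      have hwv : r w v' = β := by
        rcases h2'' with ⟨h', _⟩ | ⟨_, h''⟩
        · exact absurd h' hαβ
        · exact h''
      have h3 := tri_mem r hqw (Ne.symm hvw) (Ne.symm hvq)
      rw [eqw, hwv, hqv] at h3
      exact hαββ h3
    -- now case on whether u or v is a triangle vertex
    have hvu : r v u = c := by rw [hsym v u]; exact hruv
    by_cases hux : u = x
    · subst hux
      have hv1 : v ≠ y := fun h => hcα (by rw [← hruv, h, exy])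
      have hv2 : v ≠ z := fun h => hcα (by rw [← hruv, h, exz])
      exact INT u y z v hxy hyz hxz (Ne.symm huv) hv1 hv2 exy eyz exz hruv
    by_cases huy : u = y
    · subst huy
      have hv1 : v ≠ x := fun h => hcα (by rw [← hruv, h, hsym, exy])
      have hv2 : v ≠ z := fun h => hcα (by rw [← hruv, h, eyz])
      exact INT u x z v (Ne.symm hxy) hxz hyz (Ne.symm huv) hv1 hv2 (by rw [hsym, exy])
        exz eyz hruv
    by_cases huz : u = z
    · subst huz
      have hv1 : v ≠ x := fun h => hcα (by rw [← hruv, h, hsym, exz])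
      have hv2 : v ≠ y := fun h => hcα (by rw [← hruv, h, hsym, eyz])
      exact INT u x y v (Ne.symm hxz) hxy (Ne.symm hyz) (Ne.symm huv) hv1 hv2
        (by rw [hsym, exz]) exy (by rw [hsym, eyz]) hruv
    by_cases hvx : v = x
    · subst hvx
      exact INT v y z u hxy hyz hxz huv
        (fun h => hcα (by rw [← hvu, h, exy]))
        (fun h => hcα (by rw [← hvu, h, exz])) exy eyz exz hvu
    by_cases hvy : v = y
    · subst hvy
      exact INT v x z u (Ne.symm hxy) hxz hyz huv
        (fun h => hcα (by rw [← hvu, h, hsym, exy]))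
        (fun h => hcα (by rw [← hvu, h, eyz])) (by rw [hsym, exy]) exz eyz hvu
    by_cases hvz : v = z
    · subst hvz
      exact INT v x y u (Ne.symm hxz) hxy (Ne.symm hyz) huv
        (fun h => hcα (by rw [← hvu, h, hsym, exz]))
        (fun h => hcα (by rw [← hvu, h, hsym, eyz]))
        (by rw [hsym, exz]) exy (by rw [hsym, eyz]) hvu
    · -- EXT case
      have hpair : ∀ t : X, t ≠ u → t ≠ v →
          (r u t = ζ ∧ r v t = β) ∨ (r u t = β ∧ r v t = ζ) := by
        intro t htu htv
        have h1 := tri_mem r huv (Ne.symm htv) (Ne.symm htu)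
        rw [hruv] at h1
        have h1' := hconly _ h1 (by rw [mem_triple]; tauto)
        rw [ms_swap12 (a := β)] at h1'
        have h1'' := pair_eq.mp (cancel1 h1')
        rcases h1'' with ⟨h', h''⟩ | ⟨h', h''⟩
        · left; exact ⟨h'', h'⟩
        · right; exact ⟨h'', h'⟩
      -- two-of-three pigeonhole
      have Hβ : ∀ t t' : X, t ≠ t' → t ≠ u → t' ≠ u → r t t' = α →
          r u t = β → r u t' = β → False := by
        intro t t' h1 h2 h3 h4 h5 h6
        have htri := tri_mem r (Ne.symm h2) h1 (Ne.symm h3)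
        rw [h5, h4, h6, ms_rot] at htri
        exact hαββ htri
      have Hζ : ∀ t t' : X, t ≠ t' → t ≠ u → t' ≠ u → t ≠ v → t' ≠ v → r t t' = α →
          r u t = ζ → r u t' = ζ → r v t = β → r v t' = β → False := by
        intro t t' h1 h2 h3 h2v h3v h4 h5 h6 h7 h8
        have htri := tri_mem r (Ne.symm h2) h1 (Ne.symm h3)
        rw [h5, h4, h6, ms_rot] at htri
        -- htri : {α, ζ, ζ} ∈ A3
        have hζα : ζ = α := by
          rcases hMem _ htri with h | h | h | h
          · exact K5 h
          · exact absurd h (fun h' => K5b hβα h')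
          · rw [hT3eq] at h; exact absurd h (fun h' => K6 hαβ hαc hβc h')
          · rw [← hd4] at h; exact K7 h
        have htri2 := tri_mem r (Ne.symm h2v) h1 (Ne.symm h3v)
        rw [h7, h4, h8, ms_rot] at htri2
        exact hαββ htri2
      rcases hpair x (Ne.symm hux) (Ne.symm hvx) with ⟨px, qx⟩ | ⟨px, qx⟩ <;>
        rcases hpair y (Ne.symm huy) (Ne.symm hvy) with ⟨py, qy⟩ | ⟨py, qy⟩ <;>
        rcases hpair z (Ne.symm huz) (Ne.symm hvz) with ⟨pz, qz⟩ | ⟨pz, qz⟩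
      · exact Hζ x y hxy (Ne.symm hux) (Ne.symm huy) (Ne.symm hvx) (Ne.symm hvy) exy px py qx qy
      · exact Hζ x y hxy (Ne.symm hux) (Ne.symm huy) (Ne.symm hvx) (Ne.symm hvy) exy px py qx qy
      · exact Hζ x z hxz (Ne.symm hux) (Ne.symm huz) (Ne.symm hvx) (Ne.symm hvz) exz px pz qx qz
      · exact Hβ y z hyz (Ne.symm huy) (Ne.symm huz) eyz py pz
      · exact Hζ y z hyz (Ne.symm huy) (Ne.symm huz) (Ne.symm hvy) (Ne.symm hvz) eyz py pz qy qz
      · exact Hβ x z hxz (Ne.symm hux) (Ne.symm huz) exz px pz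
      · exact Hβ x y hxy (Ne.symm hux) (Ne.symm huy) exy px py
      · exact Hβ x y hxy (Ne.symm hux) (Ne.symm huy) exy px py
  · -- Case II.B
    have hN : ∀ d : C, ({α,α,d} : Multiset C) ∈ A3 r → d = α ∨ d = β := by
      intro d hd
      by_contra hcon
      push_neg at hcon
      exact hIIA ⟨d, hcon.1, hcon.2, hd⟩
    exact caseIIB r hsym hxy hyz hxz exy eyz exz hβα hcα hcβ heα heβ hec ⟨u, v, huv, hruv⟩
      heIm hΦeq hA3eq hβT3 hN hcA

theorem mainClaim [Fintype X] (hsym : ∀ x y, r x y = r y x)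
    (ha2' : (colorIm r).ncard = 4) (ha3' : (A3 r).ncard = 4) {α β : C} (hβα : β ≠ α)
    (hααα : ({α, α, α} : Multiset C) ∈ A3 r) (hααβ : ({α, α, β} : Multiset C) ∈ A3 r) :
    ∀ c ∈ colorIm r, ({α, α, c} : Multiset C) ∈ A3 r := by
  intro c hcIm
  by_contra hcA
  -- the α-triangle
  obtain ⟨x, y, z, hxy, hyz, hxz, hm⟩ := hααα
  rw [triple_eq'] at hm
  have exy : r x y = α := by tauto
  have eyz : r y z = α := by tauto
  have exz : r x z = α := by tauto
  have hααα : ({α, α, α} : Multiset C) ∈ A3 r := by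
    have := tri_mem r hxy hyz hxz
    rwa [exy, eyz, exz] at this
  -- basic distinctness
  have hcα : c ≠ α := fun h => hcA (h ▸ hααα)
  have hcβ : c ≠ β := fun h => hcA (h ▸ hααβ)
  have hαIm : α ∈ colorIm r := ⟨x, y, hxy, exy⟩
  have hβIm : β ∈ colorIm r := A3_sub_colorIm r hααβ (by rw [mem_triple]; tauto)
  -- the fourth color e
  obtain ⟨u', v', hu'v', hu'α, hu'β, hv'α, hv'β, hu'Im, hv'Im, hΦeq'⟩ :=
    four_decomp ha2' hαIm hβIm (Ne.symm hβα)
  have hce : c = u' ∨ c = v' := by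
    have h4 : c ∈ ({α, β, u', v'} : Set C) := by rw [← hΦeq']; exact hcIm
    simp only [Set.mem_insert_iff, Set.mem_singleton_iff] at h4
    rcases h4 with h | h | h | h
    · exact absurd h hcα
    · exact absurd h hcβ
    · exact Or.inl h
    · exact Or.inr h
  obtain ⟨e, heα, heβ, hec, heIm, hΦeq⟩ :
      ∃ e, e ≠ α ∧ e ≠ β ∧ e ≠ c ∧ e ∈ colorIm r ∧ colorIm r = {α, β, c, e} := by
    rcases hce with rfl | rfl
    · exact ⟨v', hv'α, hv'β, Ne.symm hu'v', hv'Im, hΦeq'⟩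
    · refine ⟨u', hu'α, hu'β, hu'v', hu'Im, ?_⟩
      rw [hΦeq']
      ext d
      simp only [Set.mem_insert_iff, Set.mem_singleton_iff]
      tauto
  -- decomposition of A3
  have hABne : ({α,α,α} : Multiset C) ≠ ({α,α,β} : Multiset C) := by
    intro h
    rw [triple_eq'] at h
    rcases h with ⟨_,_,h⟩|⟨_,_,h⟩|⟨_,_,h⟩|⟨_,_,h⟩|⟨_,_,h⟩|⟨_,_,h⟩ <;> simp_all
  obtain ⟨T3, T4, hT34, hT3a, hT3b, hT4a, hT4b, hT3A, hT4A, hA3eq⟩ :=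
    four_decomp ha3' hααα hααβ hABne
  -- where is β?
  by_cases hβ3 : β ∈ T3
  · exact caseII r hsym hxy hyz hxz exy eyz exz hβα hcα hcβ heα heβ hec hcIm heIm hΦeq
      hA3eq hβ3 hcA
  by_cases hβ4 : β ∈ T4
  · refine caseII r (T3 := T4) (T4 := T3) hsym hxy hyz hxz exy eyz exz hβα hcα hcβ heα heβ hec hcIm heIm hΦeq
      ?_ hβ4 hcA
    rw [hA3eq, Set.pair_comm T3 T4]
  · exact caseI r hsym hβα hcα hcβ hβIm hcIm
      (fun m hm => by rw [hA3eq] at hm; simpa using hm) hβ3 hβ4 hcA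

theorem almost_final [Fintype X] (hsym : ∀ x y, r x y = r y x)
    (ha2' : (colorIm r).ncard = 4) (ha3' : (A3 r).ncard = 4) (α : C)
    (hααα : ({α, α, α} : Multiset C) ∈ A3 r)
    (hnotclosed : ¬ IsClosedColors r {α}) :
    ∃ β γ δ : C, (α ≠ β ∧ α ≠ γ ∧ α ≠ δ ∧ β ≠ γ ∧ β ≠ δ ∧ γ ≠ δ) ∧
      colorIm r = {α, β, γ, δ} ∧
      A3 r = {({α, α, α} : Multiset C), ({α, α, β} : Multiset C),
        ({α, α, γ} : Multiset C), ({α, α, δ} : Multiset C)} := by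
  classical
  obtain ⟨β, hβα, hααβ⟩ : ∃ β, β ≠ α ∧ ({α,α,β} : Multiset C) ∈ A3 r := by
    by_contra hcon
    push_neg at hcon
    apply hnotclosed
    intro a b g ha hb hA
    rcases ha with rfl
    rcases hb with rfl
    by_contra hg
    exact hcon g (fun h => hg h) hA
  have main := mainClaim r hsym ha2' ha3' hβα hααα hααβ
  have hαIm : α ∈ colorIm r := A3_sub_colorIm r hααα (by rw [mem_triple]; tauto)
  have hβIm : β ∈ colorIm r := A3_sub_colorIm r hααβ (by rw [mem_triple]; tauto)
  obtain ⟨γ, δ, hγδ, hγα, hγβ, hδα, hδβ, hγIm, hδIm, hΦeq⟩ :=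
    four_decomp ha2' hαIm hβIm (Ne.symm hβα)
  have m3 := main γ hγIm
  have m4 := main δ hδIm
  refine ⟨β, γ, δ, ⟨Ne.symm hβα, Ne.symm hγα, Ne.symm hδα, Ne.symm hγβ, Ne.symm hδβ, hγδ⟩,
    hΦeq, ?_⟩
  have d12 : ({α,α,α} : Multiset C) ≠ {α,α,β} := fun h => hβα (K8 h.symm)
  have d13 : ({α,α,α} : Multiset C) ≠ {α,α,γ} := fun h => hγα (K8 h.symm)
  have d14 : ({α,α,α} : Multiset C) ≠ {α,α,δ} := fun h => hδα (K8 h.symm)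
  have d23 : ({α,α,β} : Multiset C) ≠ {α,α,γ} := fun h => hγβ (K9 hβα h.symm)
  have d24 : ({α,α,β} : Multiset C) ≠ {α,α,δ} := fun h => hδβ (K9 hβα h.symm)
  have d34 : ({α,α,γ} : Multiset C) ≠ {α,α,δ} := fun h => hγδ (K9 hδα h)
  have hsub : ({({α,α,α} : Multiset C), ({α,α,β} : Multiset C),
      ({α,α,γ} : Multiset C), ({α,α,δ} : Multiset C)} : Set (Multiset C)) ⊆ A3 r := by
    intro m hm
    simp only [Set.mem_insert_iff, Set.mem_singleton_iff] at hm
    rcases hm with rfl | rfl | rfl | rfl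
    · exact hααα
    · exact hααβ
    · exact m3
    · exact m4
  have hfinA : (A3 r).Finite := Set.finite_of_ncard_ne_zero (by rw [ha3']; omega)
  have hncard : ({({α,α,α} : Multiset C), ({α,α,β} : Multiset C),
      ({α,α,γ} : Multiset C), ({α,α,δ} : Multiset C)} : Set (Multiset C)).ncard = 4 := by
    rw [Set.ncard_insert_of_notMem
        (by simp [Ne.symm hβα, Ne.symm hγα, Ne.symm hδα]),
      Set.ncard_insert_of_notMem (by simp [Ne.symm hγβ, Ne.symm hδβ]),
      Set.ncard_pair d34]
  exact (Set.eq_of_subset_of_ncard_le hsub (by rw [ha3', hncard]) hfinA).symm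

end space

/-- Lemma `lem:n10`. -/
theorem lem_n10 {X C : Type*} [Fintype X] (r : X → X → C)
    (hsym : ∀ x y, r x y = r y x)
    (ha2 : a2 r = 4) (ha3 : a3 r = 4) (α : C)
    (hααα : ({α, α, α} : Multiset C) ∈ A3 r)
    (hnotclosed : ¬ IsClosedColors r {α}) :
    ∃ β γ δ : C, (α ≠ β ∧ α ≠ γ ∧ α ≠ δ ∧ β ≠ γ ∧ β ≠ δ ∧ γ ≠ δ) ∧
      colorIm r = {α, β, γ, δ} ∧
      A3 r = {({α, α, α} : Multiset C), ({α, α, β} : Multiset C),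
        ({α, α, γ} : Multiset C), ({α, α, δ} : Multiset C)} := by
  exact almost_final r hsym ha2 ha3 α hααα hnotclosed
end

section
/- Let (X,r) be a finite colored space with 2 ≤ a_2(r), m_2(r) > 0, and |X| ≥ 5. Then there exists a fusion r_1 of r such that a_2(r) − a_2(r_1) = 1 and a_3(r) − a_3(r_1) ≥ 1. -/
/-!
Recoloring `b` as `a` (two distinct colors of `r`) is a fusion with exactly one color fewer, and
it lowers `a₃` unless it is injective on triangle types. So suppose every such merge is injective.
Then two triangle types sharing two colors coincide, and the types `ααγ` and `γδδ` occur together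
only if `δ = α`. Take a vertex `x` with two `α`-neighbours `y, z` and put `γ = r y z`. Every vertex
outside `{x, y, z}` sees `x, y, z` in the colors `γ, α, α`, and two such vertices are joined by `γ`.
Since `|X| ≥ 5` there are two of them, which with `x` span a triangle of type `γγγ`; hence
`γ = α`, so `r` has a single color, contradicting `a₂ ≥ 2`.
-/

section Recoloring

variable {X C D : Type*} (r : X → X → C)

lemma colorIm_finite [Finite X] : (colorIm r).Finite :=
  (Set.finite_range fun p : X × X => r p.1 p.2).subset
    (by rintro _ ⟨x, y, -, rfl⟩; exact ⟨(x, y), rfl⟩)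

lemma A3_finite [Finite X] : (A3 r).Finite :=
  (Set.finite_range fun p : X × X × X =>
      ({r p.1 p.2.1, r p.2.1 p.2.2, r p.1 p.2.2} : Multiset C)).subset
    (by rintro _ ⟨x, y, z, -, -, -, rfl⟩; exact ⟨(x, y, z), rfl⟩)

variable (f : C → D)

lemma isFusion_comp : IsFusion r (fun x y => f (r x y)) :=
  fun _ _ _ _ _ _ h => congrArg f h

lemma colorIm_comp : colorIm (fun x y => f (r x y)) = f '' colorIm r := by
  ext c
  constructor
  · rintro ⟨x, y, hxy, rfl⟩
    exact ⟨r x y, ⟨x, y, hxy, rfl⟩, rfl⟩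
  · rintro ⟨_, ⟨x, y, hxy, rfl⟩, rfl⟩
    exact ⟨x, y, hxy, rfl⟩

lemma A3_comp : A3 (fun x y => f (r x y)) = Multiset.map f '' A3 r := by
  ext m
  constructor
  · rintro ⟨x, y, z, hxy, hyz, hxz, rfl⟩
    exact ⟨_, ⟨x, y, z, hxy, hyz, hxz, rfl⟩, by simp⟩
  · rintro ⟨_, ⟨x, y, z, hxy, hyz, hxz, rfl⟩, rfl⟩
    exact ⟨x, y, z, hxy, hyz, hxz, by simp⟩

lemma a3_comp_lt [Finite X] (h : ¬Set.InjOn (Multiset.map f) (A3 r)) :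
    a3 (fun x y => f (r x y)) < a3 r := by
  rw [a3, a3, A3_comp]
  exact (Set.ncard_image_le (A3_finite r)).lt_of_ne
    (mt (Set.ncard_image_iff (A3_finite r)).mp h)

end Recoloring

section Merging

variable {X C : Type*} [DecidableEq C]

def mergeColor (a b c : C) : C :=
  if c = b then a else c

lemma image_mergeColor {s : Set C} {a b : C} (ha : a ∈ s) (hab : a ≠ b) :
    mergeColor a b '' s = s \ {b} := by
  ext c
  constructor
  · rintro ⟨d, hd, rfl⟩
    by_cases hdb : d = b
    · simp [mergeColor, hdb, ha, hab]
    · simp [mergeColor, hdb, hd]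
  · rintro ⟨hc, hcb⟩
    exact ⟨c, hc, if_neg hcb⟩

lemma a2_comp_mergeColor_add_one [Finite X] (r : X → X → C) {a b : C} (ha : a ∈ colorIm r)
    (hb : b ∈ colorIm r) (hab : a ≠ b) :
    a2 (fun x y => mergeColor a b (r x y)) + 1 = a2 r := by
  rw [a2, a2, colorIm_comp, image_mergeColor ha hab]
  exact Set.ncard_sdiff_singleton_add_one hb (colorIm_finite r)

def MergeInjective (r : X → X → C) : Prop :=
  ∀ a ∈ colorIm r, ∀ b ∈ colorIm r, a ≠ b → Set.InjOn (Multiset.map (mergeColor a b)) (A3 r)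

theorem exists_fusion_of_not_mergeInjective [Finite X] {r : X → X → C}
    (hsym : ∀ x y, r x y = r y x) (h : ¬MergeInjective r) :
    ∃ r₁ : X → X → C, (∀ x y, r₁ x y = r₁ y x) ∧ IsFusion r r₁ ∧
      a2 r₁ + 1 = a2 r ∧ a3 r₁ + 1 ≤ a3 r := by
  simp only [MergeInjective, not_forall] at h
  obtain ⟨a, ha, b, hb, hab, hninj⟩ := h
  exact ⟨fun x y => mergeColor a b (r x y), fun x y => congrArg _ (hsym x y), isFusion_comp r _,
    a2_comp_mergeColor_add_one r ha hb hab, a3_comp_lt r _ hninj⟩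

end Merging

lemma Multiset.triple_swap {C : Type*} (a b c : C) : ({a, b, c} : Multiset C) = {b, a, c} :=
  Multiset.cons_swap a b {c}

lemma Multiset.triple_rotate {C : Type*} (a b c : C) : ({a, b, c} : Multiset C) = {b, c, a} := by
  rw [Multiset.triple_swap]
  exact congrArg (b ::ₘ ·) (Multiset.pair_comm a c)

lemma mem_colorIm {X C : Type*} {r : X → X → C} {x y : X} (h : x ≠ y) : r x y ∈ colorIm r :=
  ⟨x, y, h, rfl⟩

lemma isosceles_mem_A3 {X C : Type*} {r : X → X → C} {x y z : X} {α : C} (hxy : x ≠ y)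
    (hyz : y ≠ z) (hxz : x ≠ z) (hy : r x y = α) (hz : r x z = α) :
    ({α, α, r y z} : Multiset C) ∈ A3 r := by
  have T : {r x y, r y z, r x z} ∈ A3 r := ⟨x, y, z, hxy, hyz, hxz, rfl⟩
  rwa [hy, hz, Multiset.triple_rotate, Multiset.triple_rotate] at T

namespace MergeInjective

variable {X C : Type*} [DecidableEq C] {r : X → X → C}

theorem third_eq (hr : MergeInjective r) {δ ε ζ ζ' : C} (h : {δ, ε, ζ} ∈ A3 r)
    (h' : {δ, ε, ζ'} ∈ A3 r) (hζ : ζ ∈ colorIm r) (hζ' : ζ' ∈ colorIm r) : ζ = ζ' := by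
  by_contra hne
  simpa [hne] using hr ζ hζ ζ' hζ' hne h h' (by simp [mergeColor])

theorem legs_eq (hr : MergeInjective r) {α γ δ : C} (h : {α, α, γ} ∈ A3 r)
    (h' : {γ, δ, δ} ∈ A3 r) (hα : α ∈ colorIm r) (hδ : δ ∈ colorIm r) : δ = α := by
  by_contra hne
  -- recoloring `δ` as `α` sends both types to `{α, α, γ'}`
  have heq := hr α hα δ hδ (Ne.symm hne) h h'
    (by simpa [mergeColor] using (Multiset.triple_rotate (mergeColor α δ γ) α α).symm)
  have := congrArg (Multiset.count δ) heq
  simp only [Multiset.insert_eq_cons, Multiset.count_cons, Multiset.count_singleton] at this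
  split_ifs at this <;> omega

theorem outside_colors (hr : MergeInjective r) {x y z w : X} {α : C}
    (hxy : x ≠ y) (hyz : y ≠ z) (hxz : x ≠ z) (hy : r x y = α) (hz : r x z = α)
    (hw : w ≠ x ∧ w ≠ y ∧ w ≠ z) :
    r w x = r y z ∧ r w y = α ∧ r w z = α := by
  obtain ⟨hwx, hwy, hwz⟩ := hw
  set γ := r y z
  have hαIm : α ∈ colorIm r := hy ▸ mem_colorIm hxy
  have T' : ({α, α, γ} : Multiset C) ∈ A3 r := isosceles_mem_A3 hxy hyz hxz hy hz
  have T : ({γ, α, α} : Multiset C) ∈ A3 r := by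
    rwa [Multiset.triple_rotate, Multiset.triple_rotate] at T'
  have Txy : ({r w x, α, r w y} : Multiset C) ∈ A3 r := hy ▸ ⟨w, x, y, hwx, hxy, hwy, rfl⟩
  have Txz : ({r w x, α, r w z} : Multiset C) ∈ A3 r := hz ▸ ⟨w, x, z, hwx, hxz, hwz, rfl⟩
  have Tyz : ({r w y, γ, r w z} : Multiset C) ∈ A3 r := ⟨w, y, z, hwy, hyz, hwz, rfl⟩
  have hwx_eq : r w x = γ := by
    by_contra hne
    have hwy_ne : r w y ≠ α := by
      rintro hwy_eq
      rw [hwy_eq, Multiset.triple_rotate] at Txy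
      exact hne (hr.third_eq Txy T' (mem_colorIm hwx) (mem_colorIm hyz))
    have hwyz : r w y = r w z := hr.third_eq Txy Txz (mem_colorIm hwy) (mem_colorIm hwz)
    rw [← hwyz, Multiset.triple_swap] at Tyz
    exact hwy_ne (hr.legs_eq T' Tyz hαIm (mem_colorIm hwy))
  rw [hwx_eq] at Txy Txz
  exact ⟨hwx_eq, hr.third_eq Txy T (mem_colorIm hwy) hαIm,
    hr.third_eq Txz T (mem_colorIm hwz) hαIm⟩

theorem outside_pair_color (hr : MergeInjective r) {x y z p q : X} {α : C}
    (hxy : x ≠ y) (hyz : y ≠ z) (hxz : x ≠ z) (hy : r x y = α) (hz : r x z = α)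
    (hpq : p ≠ q) (hp : p ≠ x ∧ p ≠ y ∧ p ≠ z) (hq : q ≠ x ∧ q ≠ y ∧ q ≠ z) :
    r p q = r y z := by
  have Tpqy : {r p q, r q y, r p y} ∈ A3 r := ⟨p, q, y, hpq, hq.2.1, hp.2.1, rfl⟩
  rw [(hr.outside_colors hxy hyz hxz hy hz hq).2.1, (hr.outside_colors hxy hyz hxz hy hz hp).2.1,
    Multiset.triple_rotate] at Tpqy
  exact hr.third_eq Tpqy (isosceles_mem_A3 hxy hyz hxz hy hz) (mem_colorIm hpq) (mem_colorIm hyz)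

theorem colorIm_subset_singleton (hr : MergeInjective r) (hsym : ∀ x y, r x y = r y x)
    {x y z w w' : X} {α : C} (hxy : x ≠ y) (hyz : y ≠ z) (hxz : x ≠ z)
    (hy : r x y = α) (hz : r x z = α) (hww' : w ≠ w') (hw : w ≠ x ∧ w ≠ y ∧ w ≠ z)
    (hw' : w' ≠ x ∧ w' ≠ y ∧ w' ≠ z) : colorIm r ⊆ {α} := by
  have hout := fun {p} => hr.outside_colors (w := p) hxy hyz hxz hy hz
  have hout_out := fun {p q} => hr.outside_pair_color (p := p) (q := q) hxy hyz hxz hy hz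
  have hyz_eq : r y z = α := by
    have Tww'x : {r w w', r w' x, r w x} ∈ A3 r := ⟨w, w', x, hww', hw'.1, hw.1, rfl⟩
    rw [hout_out hww' hw hw', (hout hw').1, (hout hw).1] at Tww'x
    exact hr.legs_eq (isosceles_mem_A3 hxy hyz hxz hy hz) Tww'x (hy ▸ mem_colorIm hxy)
      (mem_colorIm hyz)
  have hedge : ∀ p q, p ≠ q → q = x ∨ q = y ∨ q = z → r p q = α := by
    intro p q hpq hq
    by_cases hp : p = x ∨ p = y ∨ p = z
    · rcases hp with rfl | rfl | rfl <;> rcases hq with rfl | rfl | rfl <;>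
        first | exact absurd rfl hpq | assumption | (rw [hsym]; assumption)
    · push Not at hp
      obtain ⟨hpx, hpy, hpz⟩ := hout hp
      rcases hq with rfl | rfl | rfl
      exacts [hpx.trans hyz_eq, hpy, hpz]
  rintro _ ⟨p, q, hpq, rfl⟩
  by_cases hq : q = x ∨ q = y ∨ q = z
  · exact hedge p q hpq hq
  by_cases hp : p = x ∨ p = y ∨ p = z
  · rw [hsym]
    exact hedge q p hpq.symm hp
  push Not at hp hq
  exact (hout_out hpq hp hq).trans hyz_eq

end MergeInjective

/-- Lemma `lem:a1`. -/
theorem lem_a1 {X C : Type*} [Fintype X] (r : X → X → C)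
    (hsym : ∀ x y, r x y = r y x)
    (h2 : 2 ≤ a2 r) (hm : 0 < (Mdeg r 2).ncard) (hX : 5 ≤ Fintype.card X) :
    ∃ r₁ : X → X → C, (∀ x y, r₁ x y = r₁ y x) ∧ IsFusion r r₁ ∧
      a2 r₁ + 1 = a2 r ∧ a3 r₁ + 1 ≤ a3 r := by
  classical
  by_cases hr : MergeInjective r
  · obtain ⟨α, x, hx⟩ := Set.nonempty_of_ncard_ne_zero hm.ne'
    obtain ⟨y, z, ⟨hyx, hy⟩, ⟨hzx, hz⟩, hyz⟩ := (Set.one_lt_ncard_iff (Set.toFinite _)).mp hx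
    have hcompl : 1 < ({x, y, z}ᶜ : Finset X).card := by
      have := Finset.card_le_three (a := x) (b := y) (c := z)
      rw [Finset.card_compl]
      omega
    obtain ⟨w, hw, w', hw', hww'⟩ := Finset.one_lt_card.mp hcompl
    simp only [Finset.mem_compl, Finset.mem_insert, Finset.mem_singleton, not_or] at hw hw'
    have hsub := hr.colorIm_subset_singleton hsym hyx.symm hyz hzx.symm hy hz hww' hw hw'
    have := Set.ncard_le_ncard hsub
    rw [Set.ncard_singleton] at this
    exact absurd h2 (by rw [a2]; omega)
  · exact exists_fusion_of_not_mergeInjective hsym hr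
end

section
/- Let X be a 6-element set partitioned into sets Y and Z with |Y| = |Z| = 3, and let r be the coloring of the 2-subsets of X with four distinct colors α,β,γ,δ defined by: r({u,v}) = α whenever both u,v ∈ Y or both u,v ∈ Z; and the nine 2-subsets joining Y to Z are partitioned into three pairwise disjoint perfect matchings E_β = r^{-1}(β), E_γ = r^{-1}(γ), E_δ = r^{-1}(δ) between Y and Z (each consisting of three disjoint edges covering X). Then every subset W of X with |W| ≥ 4 and |Y ∩ W| ≠ 2 satisfies A_3(r_W) = {ααα, αβγ, αγδ, αδβ}. -/
/-- Example after Lemma 3.6. -/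
theorem example_3_plus_3 {X C : Type*} [Fintype X] (r : X → X → C)
    (hsym : ∀ x y, r x y = r y x)
    (Y Z : Set X) (hdisj : Disjoint Y Z) (hunion : Y ∪ Z = Set.univ)
    (hYcard : Y.ncard = 3) (hZcard : Z.ncard = 3)
    (α β γ δ : C)
    (hdist : α ≠ β ∧ α ≠ γ ∧ α ≠ δ ∧ β ≠ γ ∧ β ≠ δ ∧ γ ≠ δ)
    (hα : ∀ u v : X, u ≠ v → ((u ∈ Y ∧ v ∈ Y) ∨ (u ∈ Z ∧ v ∈ Z)) → r u v = α)
    (hcross : ∀ u v : X, u ∈ Y → v ∈ Z → r u v ∈ ({β, γ, δ} : Set C))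
    (hmatch : ∀ c ∈ ({β, γ, δ} : Set C), IsMatchingOn r {c})
    (hperf : ∀ c ∈ ({β, γ, δ} : Set C), ∀ u : X, ∃ v : X, v ≠ u ∧ r u v = c) :
    ∀ W : Set X, 4 ≤ W.ncard → (Y ∩ W).ncard ≠ 2 →
      A3on r W = {({α, α, α} : Multiset C), ({α, β, γ} : Multiset C),
        ({α, γ, δ} : Multiset C), ({α, δ, β} : Multiset C)} := by
  obtain ⟨hab, hag, had, hbg, hbd, hgd⟩ := hdist
  have swap : ∀ a b c : C, ({a,b,c} : Multiset C) = {b,a,c} :=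
    fun a b c => Multiset.cons_swap a b {c}
  have swap23 : ∀ a b c : C, ({a,b,c} : Multiset C) = {a,c,b} :=
    fun a b c => congrArg (a ::ₘ ·) (Multiset.cons_swap b c 0)
  have rot : ∀ a b c : C, ({a,b,c} : Multiset C) = {b,c,a} :=
    fun a b c => (swap a b c).trans (swap23 b a c)
  have mem2 : ∀ x : X, x ∈ Y ∨ x ∈ Z := by
    intro x
    have : x ∈ Y ∪ Z := by rw [hunion]; exact Set.mem_univ x
    exact this
  have hac : ∀ c ∈ ({β, γ, δ} : Set C), α ≠ c := by
    intro c hc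
    simp only [Set.mem_insert_iff, Set.mem_singleton_iff] at hc
    rcases hc with rfl | rfl | rfl <;> assumption
  have crossmem : ∀ w u : X, (w ∈ Y ∧ u ∈ Z) ∨ (w ∈ Z ∧ u ∈ Y) →
      r w u ∈ ({β, γ, δ} : Set C) := by
    rintro w u (⟨hw, hu⟩ | ⟨hw, hu⟩)
    · exact hcross w u hw hu
    · rw [hsym]; exact hcross u w hu hw
  have crossne : ∀ w u v : X, u ≠ w → v ≠ w → u ≠ v →
      ((w ∈ Y ∧ u ∈ Z ∧ v ∈ Z) ∨ (w ∈ Z ∧ u ∈ Y ∧ v ∈ Y)) → r w u ≠ r w v := by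
    intro w u v huw hvw huv hside h
    have hc : r w u ∈ ({β, γ, δ} : Set C) := crossmem w u (by tauto)
    exact huv (hmatch _ hc w u v huw hvw rfl h.symm)
  intro W hW4 hYW2
  have pairmem : ∀ c c', c ∈ ({β, γ, δ} : Set C) → c' ∈ ({β, γ, δ} : Set C) → c ≠ c' →
      ({α, c, c'} : Multiset C) ∈ ({({α, α, α} : Multiset C), ({α, β, γ} : Multiset C),
        ({α, γ, δ} : Multiset C), ({α, δ, β} : Multiset C)} : Set (Multiset C)) := by
    intro c c' hc hc' hne
    simp only [Set.mem_insert_iff, Set.mem_singleton_iff] at hc hc' ⊢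
    rcases hc with rfl | rfl | rfl <;> rcases hc' with rfl | rfl | rfl
    · exact absurd rfl hne
    · exact Or.inr (Or.inl rfl)
    · exact Or.inr (Or.inr (Or.inr (swap23 _ _ _)))
    · exact Or.inr (Or.inl (swap23 _ _ _))
    · exact absurd rfl hne
    · exact Or.inr (Or.inr (Or.inl rfl))
    · exact Or.inr (Or.inr (Or.inr rfl))
    · exact Or.inr (Or.inr (Or.inl (swap23 _ _ _)))
    · exact absurd rfl hne
  ext m
  constructor
  · rintro ⟨x, hxW, y, hyW, z, hzW, hxy, hyz, hxz, rfl⟩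
    rcases mem2 x with hx | hx <;> rcases mem2 y with hy | hy <;> rcases mem2 z with hz | hz
    · -- YYY
      have h1 := hα x y hxy (Or.inl ⟨hx, hy⟩)
      have h2 := hα y z hyz (Or.inl ⟨hy, hz⟩)
      have h3 := hα x z hxz (Or.inl ⟨hx, hz⟩)
      exact Or.inl (by rw [h1, h2, h3])
    · -- YYZ
      have h1 := hα x y hxy (Or.inl ⟨hx, hy⟩)
      have hne : r y z ≠ r x z := by
        have := crossne z y x hyz hxz (Ne.symm hxy) (Or.inr ⟨hz, hy, hx⟩)
        rwa [hsym z y, hsym z x] at this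
      rw [h1]
      exact pairmem _ _ (crossmem y z (Or.inl ⟨hy, hz⟩)) (crossmem x z (Or.inl ⟨hx, hz⟩)) hne
    · -- YZY
      have h3 := hα x z hxz (Or.inl ⟨hx, hz⟩)
      have hne : r x y ≠ r y z := by
        have := crossne y x z hxy (Ne.symm hyz) hxz (Or.inr ⟨hy, hx, hz⟩)
        rwa [hsym y x] at this
      have heq : ({r x y, r y z, r x z} : Multiset C) = {α, r x y, r y z} := by
        rw [h3]; exact (rot α (r x y) (r y z)).symm
      rw [heq]
      exact pairmem _ _ (crossmem x y (Or.inl ⟨hx, hy⟩))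
        (crossmem y z (Or.inr ⟨hy, hz⟩)) hne
    · -- YZZ
      have h2 := hα y z hyz (Or.inr ⟨hy, hz⟩)
      have hne : r x y ≠ r x z := crossne x y z (Ne.symm hxy) (Ne.symm hxz) hyz
        (Or.inl ⟨hx, hy, hz⟩)
      have heq : ({r x y, r y z, r x z} : Multiset C) = {α, r x y, r x z} := by
        rw [h2]; exact (swap α (r x y) (r x z)).symm
      rw [heq]
      exact pairmem _ _ (crossmem x y (Or.inl ⟨hx, hy⟩)) (crossmem x z (Or.inl ⟨hx, hz⟩)) hne
    · -- ZYY
      have h2 := hα y z hyz (Or.inl ⟨hy, hz⟩)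
      have hne : r x y ≠ r x z := crossne x y z (Ne.symm hxy) (Ne.symm hxz) hyz
        (Or.inr ⟨hx, hy, hz⟩)
      have heq : ({r x y, r y z, r x z} : Multiset C) = {α, r x y, r x z} := by
        rw [h2]; exact (swap α (r x y) (r x z)).symm
      rw [heq]
      exact pairmem _ _ (crossmem x y (Or.inr ⟨hx, hy⟩)) (crossmem x z (Or.inr ⟨hx, hz⟩)) hne
    · -- ZYZ
      have h3 := hα x z hxz (Or.inr ⟨hx, hz⟩)
      have hne : r x y ≠ r y z := by
        have := crossne y x z hxy (Ne.symm hyz) hxz (Or.inl ⟨hy, hx, hz⟩)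
        rwa [hsym y x] at this
      have heq : ({r x y, r y z, r x z} : Multiset C) = {α, r x y, r y z} := by
        rw [h3]; exact (rot α (r x y) (r y z)).symm
      rw [heq]
      exact pairmem _ _ (crossmem x y (Or.inr ⟨hx, hy⟩)) (crossmem y z (Or.inl ⟨hy, hz⟩)) hne
    · -- ZZY
      have h1 := hα x y hxy (Or.inr ⟨hx, hy⟩)
      have hne : r y z ≠ r x z := by
        have := crossne z y x hyz hxz (Ne.symm hxy) (Or.inl ⟨hz, hy, hx⟩)
        rwa [hsym z y, hsym z x] at this
      rw [h1]
      exact pairmem _ _ (crossmem y z (Or.inr ⟨hy, hz⟩)) (crossmem x z (Or.inr ⟨hx, hz⟩)) hne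
    · -- ZZZ
      have h1 := hα x y hxy (Or.inr ⟨hx, hy⟩)
      have h2 := hα y z hyz (Or.inr ⟨hy, hz⟩)
      have h3 := hα x z hxz (Or.inr ⟨hx, hz⟩)
      exact Or.inl (by rw [h1, h2, h3])
  · -- reverse inclusion
    intro hm
    have key : ∀ (Q : Set X) (w : X), w ∈ W → Q ⊆ W →
        (∀ u : X, u ≠ w → r w u ≠ α → u ∈ Q) →
        (∀ u v : X, u ≠ v → u ∈ Q → v ∈ Q → r u v = α) →
        ∀ c c', c ∈ ({β, γ, δ} : Set C) → c' ∈ ({β, γ, δ} : Set C) → c ≠ c' →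
        ({α, c, c'} : Multiset C) ∈ A3on r W := by
      intro Q w hwW hQW hside hQα c c' hc hc' hcc'
      obtain ⟨u, hu, hru⟩ := hperf c hc w
      obtain ⟨u', hu', hru'⟩ := hperf c' hc' w
      have huQ : u ∈ Q := hside u hu (by rw [hru]; exact (hac c hc).symm)
      have hu'Q : u' ∈ Q := hside u' hu' (by rw [hru']; exact (hac c' hc').symm)
      have huu' : u ≠ u' := fun h => hcc' (by rw [← hru, ← hru', h])
      refine ⟨w, hwW, u, hQW huQ, u', hQW hu'Q, hu.symm, huu', hu'.symm, ?_⟩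
      rw [hru, hQα u u' huu' huQ hu'Q, hru']
      exact swap α c c'
    have keyQ : ∀ (Q : Set X) (w : X), w ∈ W → Q ⊆ W →
        (∀ u : X, u ≠ w → r w u ≠ α → u ∈ Q) →
        (∀ u v : X, u ≠ v → u ∈ Q → v ∈ Q → r u v = α) → Q.ncard = 3 →
        m ∈ A3on r W := by
      intro Q w hwW hQW hside hQα hQ3
      simp only [Set.mem_insert_iff, Set.mem_singleton_iff] at hm
      rcases hm with rfl | rfl | rfl | rfl
      · obtain ⟨a, b, c, hab', hac', hbc', hQ⟩ := Set.ncard_eq_three.mp hQ3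
        have ha : a ∈ Q := by rw [hQ]; exact Set.mem_insert a _
        have hb : b ∈ Q := by rw [hQ]; exact Set.mem_insert_of_mem _ (Set.mem_insert b _)
        have hc : c ∈ Q := by
          rw [hQ]; exact Set.mem_insert_of_mem _ (Set.mem_insert_of_mem _ rfl)
        refine ⟨a, hQW ha, b, hQW hb, c, hQW hc, hab', hbc', hac', ?_⟩
        rw [hQα a b hab' ha hb, hQα b c hbc' hb hc, hQα a c hac' ha hc]
      · exact key Q w hwW hQW hside hQα β γ (by simp) (by simp) hbg
      · exact key Q w hwW hQW hside hQα γ δ (by simp) (by simp) hgd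
      · exact key Q w hwW hQW hside hQα δ β (by simp) (by simp) hbd.symm
    have hWfin : W.Finite := Set.toFinite W
    have hsum : (Y ∩ W).ncard + (Z ∩ W).ncard = W.ncard := by
      rw [← Set.ncard_union_eq (hdisj.mono Set.inter_subset_left Set.inter_subset_left)
        (Set.toFinite _) (Set.toFinite _), ← Set.union_inter_distrib_right, hunion,
        Set.univ_inter]
    have hYle : (Y ∩ W).ncard ≤ 3 := by
      rw [← hYcard]; exact Set.ncard_le_ncard Set.inter_subset_left (Set.toFinite Y)
    have hZle : (Z ∩ W).ncard ≤ 3 := by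
      rw [← hZcard]; exact Set.ncard_le_ncard Set.inter_subset_left (Set.toFinite Z)
    have hcase : (Y ∩ W).ncard = 3 ∨ ((Y ∩ W).ncard = 1 ∧ (Z ∩ W).ncard = 3) := by omega
    rcases hcase with h3 | ⟨h1, h3⟩
    · -- Y ⊆ W, pick w ∈ Z ∩ W
      have hYW : Y ⊆ W := by
        have : Y ∩ W = Y := Set.eq_of_subset_of_ncard_le Set.inter_subset_left
          (by rw [h3, hYcard]) (Set.toFinite Y)
        rw [← this]; exact Set.inter_subset_right
      have hZWne : (Z ∩ W).Nonempty := by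
        apply Set.nonempty_of_ncard_ne_zero; omega
      obtain ⟨w, hwZ, hwW⟩ := hZWne
      refine keyQ Y w hwW hYW ?_ (fun u v huv hu hv => hα u v huv (Or.inl ⟨hu, hv⟩)) hYcard
      intro u huw hruα
      rcases mem2 u with hu | hu
      · exact hu
      · exact absurd (hα w u (Ne.symm huw) (Or.inr ⟨hwZ, hu⟩)) hruα
    · -- Z ⊆ W, pick w ∈ Y ∩ W
      have hZW : Z ⊆ W := by
        have : Z ∩ W = Z := Set.eq_of_subset_of_ncard_le Set.inter_subset_left
          (by rw [h3, hZcard]) (Set.toFinite Z)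
        rw [← this]; exact Set.inter_subset_right
      have hYWne : (Y ∩ W).Nonempty := by
        apply Set.nonempty_of_ncard_ne_zero; omega
      obtain ⟨w, hwY, hwW⟩ := hYWne
      refine keyQ Z w hwW hZW ?_ (fun u v huv hu hv => hα u v huv (Or.inr ⟨hu, hv⟩)) hZcard
      intro u huw hruα
      rcases mem2 u with hu | hu
      · exact absurd (hα w u (Ne.symm huw) (Or.inl ⟨hwY, hu⟩)) hruα
      · exact hu
end
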